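/- arXiv:math/9706220 — 7 statements merged into one kernel-verified Lean document; each statement's English description precedes it below -/
import Mathlib

section
/- For all integers n ≥ 1 and N ≥ 1 and every finite family ℐ = {I_1,…,I_k} of intervals on {1,…,n}, there exists a graded poset P of rank n+1 such that for every subset S ⊆ {1,…,n}, f_S(P) = N^{|{j ∈ {1,…,k} : S ∩ I_j ≠ ∅}|}. -/
/-- A graded poset: a finite poset with a least element `bot`, a greatest element `top`,
and a rank function that is `0` at `bot` and increases by one along covering relations. -/
structure GradedPoset where
  carrier : Type
  [fintypeCarrier : Fintype carrier]
  [partialOrderCarrier : PartialOrder carrier]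
  bot : carrier
  top : carrier
  bot_le : ∀ x : carrier, bot ≤ x
  le_top : ∀ x : carrier, x ≤ top
  rank : carrier → ℕ
  rank_bot : rank bot = 0
  rank_covBy : ∀ x y : carrier, x ⋖ y → rank y = rank x + 1

attribute [instance] GradedPoset.fintypeCarrier GradedPoset.partialOrderCarrier

/-- The flag number `f_S(P)`: the number of chains in `P` whose set of ranks is `S`. -/
noncomputable def flagNum (P : GradedPoset) (S : Finset ℕ) : ℕ :=
  Set.ncard {c : Finset P.carrier |
    IsChain (· ≤ ·) (↑c : Set P.carrier) ∧ c.image P.rank = S}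

namespace FlagCon

variable (n M k : ℕ) (I : Fin k → Finset ℕ)

/-- Elements: a rank in `Fin (n+2)` together with labels supported on intervals containing it. -/
def El : Type := {p : Fin (n+2) × (Fin k → Fin (M+1)) // ∀ j, (p.1 : ℕ) ∉ I j → p.2 j = 0}

instance : Finite (El n M k I) := by unfold El; infer_instance

noncomputable instance : Fintype (El n M k I) := Fintype.ofFinite _

/-- the rank of an element -/
def rk (x : El n M k I) : ℕ := (x.1.1 : ℕ)

def Conv : Prop := ∀ (j : Fin k) (a b c : ℕ), a ≤ b → b ≤ c → a ∈ I j → c ∈ I j → b ∈ I j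

def Sub : Prop := ∀ j, I j ⊆ Finset.Icc 1 n

variable {n M k I} in
lemma rk_lt (x : El n M k I) : rk n M k I x < n + 2 := x.1.1.isLt

def Pord (hconv : Conv k I) : PartialOrder (El n M k I) where
  le x y := x = y ∨ (rk n M k I x < rk n M k I y ∧
    ∀ j, rk n M k I x ∈ I j → rk n M k I y ∈ I j → x.1.2 j = y.1.2 j)
  le_refl x := Or.inl rfl
  le_trans x y z hxy hyz := by
    rcases hxy with rfl | ⟨h1, h2⟩
    · exact hyz
    rcases hyz with rfl | ⟨h3, h4⟩
    · exact Or.inr ⟨h1, h2⟩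
    refine Or.inr ⟨h1.trans h3, fun j hx hz => ?_⟩
    have hy : rk n M k I y ∈ I j := hconv j _ _ _ h1.le h3.le hx hz
    rw [h2 j hx hy, h4 j hy hz]
  le_antisymm x y hxy hyx := by
    rcases hxy with rfl | ⟨h1, _⟩
    · rfl
    rcases hyx with rfl | ⟨h2, _⟩
    · rfl
    omega

variable {n M k I}

lemma not_zero_mem (hsub : Sub n k I) (j : Fin k) : (0 : ℕ) ∉ I j := by
  intro h; have := Finset.mem_Icc.mp (hsub j h); omega

lemma not_top_mem (hsub : Sub n k I) (j : Fin k) : (n + 1 : ℕ) ∉ I j := by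
  intro h; have := Finset.mem_Icc.mp (hsub j h); omega

variable (n M k I)

def botEl : El n M k I := ⟨((0 : Fin (n+2)), fun _ => 0), fun _ _ => rfl⟩

def topEl : El n M k I := ⟨((⟨n + 1, by omega⟩ : Fin (n+2)), fun _ => 0), fun _ _ => rfl⟩

variable {n M k I} in
lemma el_ext {x y : El n M k I} (h1 : rk n M k I x = rk n M k I y)
    (h2 : ∀ j, x.1.2 j = y.1.2 j) : x = y := by
  apply Subtype.ext
  have : x.1.1 = y.1.1 := Fin.ext h1
  obtain ⟨⟨a, f⟩, hx⟩ := x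
  obtain ⟨⟨b, g⟩, hy⟩ := y
  simp only at this h2
  subst this
  simp only [Prod.mk.injEq, true_and]
  exact funext h2

noncomputable def GP (hsub : Sub n k I) (hconv : Conv k I) : GradedPoset where
  carrier := El n M k I
  partialOrderCarrier := Pord n M k I hconv
  bot := botEl n M k I
  top := topEl n M k I
  bot_le x := by
    rcases Nat.eq_zero_or_pos (rk n M k I x) with h0 | h0
    · refine Or.inl (el_ext (x := x) (y := botEl n M k I) h0 fun j => ?_).symm
      exact x.2 j (by rw [show ((x.1.1 : ℕ)) = 0 from h0]; exact not_zero_mem hsub j)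
    · exact Or.inr ⟨h0, fun j hj _ => absurd hj (not_zero_mem hsub j)⟩
  le_top x := by
    rcases eq_or_lt_of_le (Nat.lt_succ_iff.mp (rk_lt x)) with h0 | h0
    · refine Or.inl (el_ext (x := x) (y := topEl n M k I) h0 fun j => ?_)
      exact x.2 j (by rw [show ((x.1.1 : ℕ)) = n + 1 from h0]; exact not_top_mem hsub j)
    · exact Or.inr ⟨h0, fun j _ hj => absurd hj (not_top_mem hsub j)⟩
  rank := rk n M k I
  rank_bot := rfl
  rank_covBy x y hcov := by
    letI := Pord n M k I hconv
    obtain ⟨hle, hne⟩ := lt_iff_le_and_ne.mp hcov.lt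
    rcases hle with h | ⟨h1, h2⟩
    · exact absurd h hne
    by_contra hc
    have h2' : rk n M k I x + 2 ≤ rk n M k I y := by omega
    have hzlt : rk n M k I x + 1 < n + 2 := by have := rk_lt y; omega
    set z : El n M k I := ⟨(⟨rk n M k I x + 1, hzlt⟩, fun j =>
      if (rk n M k I x ∈ I j ∧ rk n M k I x + 1 ∈ I j) then x.1.2 j
      else if rk n M k I x + 1 ∈ I j then y.1.2 j else 0), by
        intro j hj
        simp only
        rw [if_neg (fun h => hj h.2), if_neg hj]⟩ with hz
    have hrz : rk n M k I z = rk n M k I x + 1 := rfl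
    have hxz : x < z := by
      refine lt_of_le_of_ne (Or.inr ⟨by rw [hrz]; omega, fun j hx hz' => ?_⟩) (fun h => by
        have := congrArg (rk n M k I) h; rw [hrz] at this; omega)
      rw [hrz] at hz'
      exact (if_pos ⟨hx, hz'⟩).symm
    have hzy : z < y := by
      refine lt_of_le_of_ne (Or.inr ⟨by rw [hrz]; omega, fun j hz' hy => ?_⟩) (fun h => by
        have := congrArg (rk n M k I) h; rw [hrz] at this; omega)
      rw [hrz] at hz' 
      show (if (rk n M k I x ∈ I j ∧ rk n M k I x + 1 ∈ I j) then x.1.2 j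
        else if rk n M k I x + 1 ∈ I j then y.1.2 j else 0) = y.1.2 j
      by_cases hx : rk n M k I x ∈ I j
      · rw [if_pos ⟨hx, hz'⟩]; exact h2 j hx hy
      · rw [if_neg (fun h => hx h.1), if_pos hz']
    exact hcov.2 hxz hzy

def elt (i : ℕ) (hi : i < n + 2) (g : Fin k → Fin (M+1)) : El n M k I :=
  ⟨(⟨i, hi⟩, fun j => if i ∈ I j then g j else 0), fun j hj => if_neg hj⟩

noncomputable def chainOf (S : Finset ℕ) (hb : ∀ i ∈ S, i < n + 2)
    (g : Fin k → Fin (M+1)) : Finset (El n M k I) :=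
  letI := Classical.decEq (El n M k I)
  S.attach.image fun i => elt n M k I i.1 (hb i.1 i.2) g

variable {n M k I}

lemma mem_chainOf {S : Finset ℕ} {hb : ∀ i ∈ S, i < n + 2} {g : Fin k → Fin (M+1)}
    {x : El n M k I} :
    x ∈ chainOf n M k I S hb g ↔ ∃ i, ∃ h : i ∈ S, x = elt n M k I i (hb i h) g := by
  letI := Classical.decEq (El n M k I)
  unfold chainOf
  constructor
  · intro hx
    obtain ⟨a, -, rfl⟩ := Finset.mem_image.mp hx
    exact ⟨a.1, a.2, rfl⟩
  · rintro ⟨i, h, rfl⟩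
    exact Finset.mem_image_of_mem _ (Finset.mem_attach _ ⟨i, h⟩)

lemma chain_agree {hconv : Conv k I} {c : Finset (El n M k I)}
    (hc : IsChain (Pord n M k I hconv).le ↑c) {x y : El n M k I} (hx : x ∈ c) (hy : y ∈ c)
    (j : Fin k) (hjx : rk n M k I x ∈ I j) (hjy : rk n M k I y ∈ I j) :
    x.1.2 j = y.1.2 j := by
  rcases eq_or_ne x y with rfl | hne
  · rfl
  rcases hc (Finset.mem_coe.mpr hx) (Finset.mem_coe.mpr hy) hne with h | h
  · rcases h with h | ⟨-, h2⟩
    · rw [h]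
    · exact h2 j hjx hjy
  · rcases h with h | ⟨-, h2⟩
    · rw [h]
    · exact (h2 j hjy hjx).symm

lemma flag_count (hconv : Conv k I) (S : Finset ℕ) (hb : ∀ i ∈ S, i < n + 2) :
    {c : Finset (El n M k I) | IsChain (Pord n M k I hconv).le ↑c ∧ c.image (rk n M k I) = S}
      = chainOf n M k I S hb '' {g | ∀ j, ¬(S ∩ I j).Nonempty → g j = 0} := by
  ext c
  simp only [Set.mem_setOf_eq, Set.mem_image]
  constructor
  · rintro ⟨hc, himg⟩
    have key : ∀ j : Fin k, (S ∩ I j).Nonempty → ∃ x, x ∈ c ∧ rk n M k I x ∈ S ∩ I j := by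
      intro j h
      obtain ⟨i, hi⟩ := h
      have hiS : i ∈ S := (Finset.mem_inter.mp hi).1
      have hmem : i ∈ c.image (rk n M k I) := himg ▸ hiS
      obtain ⟨x, hxc, hxi⟩ := Finset.mem_image.mp hmem
      exact ⟨x, hxc, hxi ▸ hi⟩
    choose f hfmem hfrk using key
    set g : Fin k → Fin (M+1) :=
      fun j => if h : (S ∩ I j).Nonempty then (f j h).1.2 j else 0 with hg
    have hgT : ∀ j, ¬(S ∩ I j).Nonempty → g j = 0 := fun j h => dif_neg h
    have claim : ∀ y ∈ c, ∀ h : rk n M k I y ∈ S,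
        y = elt n M k I (rk n M k I y) (hb _ h) g := by
      intro y hy h
      refine el_ext rfl fun j => ?_
      show y.1.2 j = if rk n M k I y ∈ I j then g j else 0
      by_cases hj : rk n M k I y ∈ I j
      · rw [if_pos hj]
        have hne : (S ∩ I j).Nonempty := ⟨rk n M k I y, Finset.mem_inter.mpr ⟨h, hj⟩⟩
        rw [hg]
        simp only
        rw [dif_pos hne]
        exact chain_agree hc hy (hfmem j hne) j hj (Finset.mem_inter.mp (hfrk j hne)).2
      · rw [if_neg hj]
        exact y.2 j hj
    refine ⟨g, hgT, ?_⟩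
    apply Finset.ext
    intro x
    rw [mem_chainOf]
    constructor
    · rintro ⟨i, h, rfl⟩
      have hmem : i ∈ c.image (rk n M k I) := himg ▸ h
      obtain ⟨y, hyc, hyi⟩ := Finset.mem_image.mp hmem
      subst hyi
      have hcl := claim y hyc h
      exact hcl ▸ hyc
    · intro hx
      have hxS : rk n M k I x ∈ S := himg ▸ Finset.mem_image_of_mem _ hx
      exact ⟨rk n M k I x, hxS, claim x hx hxS⟩
  · rintro ⟨g, hgT, rfl⟩
    constructor
    · intro x hx y hy hne
      rw [Finset.mem_coe, mem_chainOf] at hx hy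
      obtain ⟨i, hi, rfl⟩ := hx
      obtain ⟨i', hi', rfl⟩ := hy
      have hii : i ≠ i' := fun h => by subst h; exact hne rfl
      rcases hii.lt_or_gt with hlt | hlt
      · refine Or.inl (Or.inr ⟨hlt, fun j hj hj' => ?_⟩)
        have hj2 : i ∈ I j := hj
        have hj2' : i' ∈ I j := hj'
        show (if i ∈ I j then g j else 0) = (if i' ∈ I j then g j else 0)
        rw [if_pos hj2, if_pos hj2']
      · refine Or.inr (Or.inr ⟨hlt, fun j hj hj' => ?_⟩)
        have hj2 : i' ∈ I j := hj
        have hj2' : i ∈ I j := hj'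
        show (if i' ∈ I j then g j else 0) = (if i ∈ I j then g j else 0)
        rw [if_pos hj2, if_pos hj2']
    · apply Finset.ext
      intro i
      rw [Finset.mem_image]
      constructor
      · rintro ⟨x, hx, rfl⟩
        rw [mem_chainOf] at hx
        obtain ⟨i', h', rfl⟩ := hx
        exact h'
      · intro hi
        exact ⟨elt n M k I i (hb i hi) g, mem_chainOf.mpr ⟨i, hi, rfl⟩, rfl⟩

lemma chainOf_injOn (S : Finset ℕ) (hb : ∀ i ∈ S, i < n + 2) :
    Set.InjOn (chainOf n M k I S hb)
      {g : Fin k → Fin (M+1) | ∀ j, ¬(S ∩ I j).Nonempty → g j = 0} := by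
  intro g hg g' hg' heq
  funext j
  by_cases h : (S ∩ I j).Nonempty
  · obtain ⟨i, hi⟩ := h
    obtain ⟨hiS, hij⟩ := Finset.mem_inter.mp hi
    have hmem : elt n M k I i (hb i hiS) g ∈ chainOf n M k I S hb g' :=
      heq ▸ mem_chainOf.mpr ⟨i, hiS, rfl⟩
    rw [mem_chainOf] at hmem
    obtain ⟨i', hi', he⟩ := hmem
    have hii : i = i' := congrArg (rk n M k I) he
    subst hii
    have hval := congrArg (fun x : El n M k I => x.1.2 j) he
    simp only [elt] at hval
    rw [if_pos hij, if_pos hij] at hval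
    exact hval
  · rw [hg j h, hg' j h]

lemma T_card (s : Finset (Fin k)) :
    Set.ncard {g : Fin k → Fin (M+1) | ∀ j, j ∉ s → g j = 0} = (M+1) ^ s.card := by
  classical
  rw [← Nat.card_coe_set_eq]
  have e : {g : Fin k → Fin (M+1) | ∀ j, j ∉ s → g j = 0} ≃ (↥s → Fin (M+1)) :=
  { toFun := fun g j => g.1 j
    invFun := fun h => ⟨fun j => if hj : j ∈ s then h ⟨j, hj⟩ else 0, fun j hj => dif_neg hj⟩
    left_inv := fun g => Subtype.ext (funext fun j => by
      by_cases hj : j ∈ s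
      · simp [hj]
      · simp only [dif_neg hj]
        exact (g.2 j hj).symm)
    right_inv := fun h => funext fun j => by simp }
  rw [Nat.card_congr e, Nat.card_eq_fintype_card, Fintype.card_fun, Fintype.card_fin,
    Fintype.card_coe]

end FlagCon

theorem stmt_1 (n N : ℕ) (hn : 1 ≤ n) (hN : 1 ≤ N) (k : ℕ) (I : Fin k → Finset ℕ)
    (hI : ∀ j : Fin k, ∃ p q : ℕ, 1 ≤ p ∧ p ≤ q ∧ q ≤ n ∧ I j = Finset.Icc p q) :
    ∃ P : GradedPoset, P.rank P.top = n + 1 ∧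
      ∀ S ⊆ Finset.Icc 1 n,
        flagNum P S =
          N ^ (Finset.univ.filter (fun j : Fin k => (S ∩ I j).Nonempty)).card := by
  obtain ⟨M, rfl⟩ : ∃ M, N = M + 1 := ⟨N - 1, by omega⟩
  have hsub : FlagCon.Sub n k I := by
    intro j
    obtain ⟨p, q, hp, hpq, hq, hEq⟩ := hI j
    rw [hEq]
    exact Finset.Icc_subset_Icc hp hq
  have hconv : FlagCon.Conv k I := by
    intro j a b c hab hbc ha hc
    obtain ⟨p, q, hp, hpq, hq, hEq⟩ := hI j
    rw [hEq] at ha hc ⊢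
    rw [Finset.mem_Icc] at ha hc ⊢
    omega
  refine ⟨FlagCon.GP n M k I hsub hconv, rfl, ?_⟩
  intro S hS
  have hb : ∀ i ∈ S, i < n + 2 := fun i hi => by
    have := Finset.mem_Icc.mp (hS hi); omega
  have h1 : flagNum (FlagCon.GP n M k I hsub hconv) S
      = Set.ncard {c : Finset (FlagCon.El n M k I) |
          IsChain (FlagCon.Pord n M k I hconv).le ↑c ∧ c.image (FlagCon.rk n M k I) = S} := rfl
  have hTs : {g : Fin k → Fin (M+1) | ∀ j, ¬(S ∩ I j).Nonempty → g j = 0}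
      = {g : Fin k → Fin (M+1) |
          ∀ j, j ∉ Finset.univ.filter (fun j => (S ∩ I j).Nonempty) → g j = 0} := by
    ext g
    simp [Finset.mem_filter]
  rw [h1, FlagCon.flag_count hconv S hb,
    Set.ncard_image_of_injOn (FlagCon.chainOf_injOn S hb), hTs, FlagCon.T_card]
end

section
/- Let n ≥ 1, let P be a graded poset of rank n+1, and let ℳ be the set of maximal chains of P (each maximal chain consists of one element of each rank 0, 1, …, n+1). Then there exists a map assigning to each maximal chain C ∈ ℳ an interval system ℐ_C on {1,…,n} such that for every subset S ⊆ {1,…,n}, the number of maximal chains C ∈ ℳ for which S is a blocker of ℐ_C equals f_S(P). -/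
open Finset

theorem Nat.eq_of_sum_mul_pow_eq {B N : ℕ} {a b : ℕ → ℕ} (ha : ∀ i < N, a i < B)
    (hb : ∀ i < N, b i < B)
    (h : ∑ i ∈ range N, a i * B ^ i = ∑ i ∈ range N, b i * B ^ i) : ∀ i < N, a i = b i := by
  induction N generalizing a b with
  | zero => exact fun i hi => absurd hi (Nat.not_lt_zero i)
  | succ N ih =>
    have split (c : ℕ → ℕ) : ∑ i ∈ range (N + 1), c i * B ^ i =
        c 0 + B * ∑ i ∈ range N, c (i + 1) * B ^ i := by
      rw [sum_range_succ', mul_sum, add_comm, pow_zero, mul_one]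
      exact congrArg _ (sum_congr rfl fun i _ => by ring)
    rw [split, split] at h
    have hB : 0 < B := (Nat.zero_le _).trans_lt (ha 0 (by omega))
    have h0 : a 0 = b 0 := by
      have := congrArg (· % B) h
      simpa [Nat.mod_eq_of_lt (ha 0 (by omega)), Nat.mod_eq_of_lt (hb 0 (by omega))] using this
    have htail := ih (fun i _ => ha (i + 1) (by omega)) (fun i _ => hb (i + 1) (by omega))
      (Nat.eq_of_mul_eq_mul_left hB (by omega))
    rintro (_ | i) hi
    · exact h0
    · exact htail i (by omega)

namespace Finset

noncomputable def below (T : Finset ℕ) (i : ℕ) : ℕ := sSup {s | s ∈ T ∧ s ≤ i}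

noncomputable def above (T : Finset ℕ) (i : ℕ) : ℕ := sInf {s | s ∈ T ∧ i ≤ s}

variable {T : Finset ℕ} {i j k p q s : ℕ}

theorem below_mem_le (hs : s ∈ T) (hsi : s ≤ i) : T.below i ∈ T ∧ T.below i ≤ i :=
  Nat.sSup_mem (s := {s | s ∈ T ∧ s ≤ i}) ⟨s, hs, hsi⟩ ⟨i, fun _ ht => ht.2⟩

theorem le_below (hs : s ∈ T) (hsi : s ≤ i) : s ≤ T.below i :=
  le_csSup (s := {s | s ∈ T ∧ s ≤ i}) ⟨i, fun _ ht => ht.2⟩ ⟨hs, hsi⟩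

theorem above_mem_ge (hs : s ∈ T) (hsi : i ≤ s) : T.above i ∈ T ∧ i ≤ T.above i :=
  Nat.sInf_mem (s := {s | s ∈ T ∧ i ≤ s}) ⟨s, hs, hsi⟩

theorem above_le (hs : s ∈ T) (hsi : i ≤ s) : T.above i ≤ s :=
  Nat.sInf_le ⟨hs, hsi⟩

theorem below_above_gap (hgap : ∀ s ∈ T, s ≤ i ∨ j ≤ s) :
    ∀ s ∈ T, s ≤ T.below i ∨ T.above j ≤ s :=
  fun _ hs => (hgap _ hs).imp (le_below hs) (above_le hs)

theorem below_eq_and_above_eq (hp : p ∈ T) (hq : q ∈ T) (hgap : ∀ s ∈ T, s ≤ p ∨ q ≤ s)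
    (hpi : p ≤ i) (hiq : i ≤ q) (hi : i ∉ T) : T.below i = p ∧ T.above i = q := by
  obtain ⟨hb, hbi⟩ := below_mem_le hp hpi
  obtain ⟨ha, hia⟩ := above_mem_ge hq hiq
  have := le_below hp hpi
  have := above_le hq hiq
  have hbi' : T.below i ≠ i := fun h => hi (h ▸ hb)
  have hai' : T.above i ≠ i := fun h => hi (h ▸ ha)
  rcases hgap _ hb with h | h <;> rcases hgap _ ha with h' | h' <;> constructor <;> omega

theorem below_self (hi : i ∈ T) : T.below i = i :=
  le_antisymm (below_mem_le hi le_rfl).2 (le_below hi le_rfl)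

theorem above_self (hi : i ∈ T) : T.above i = i :=
  le_antisymm (above_le hi le_rfl) (above_mem_ge hi le_rfl).2

theorem insert_zero_insert_subset_Icc {n : ℕ} {S : Finset ℕ} (hS : S ⊆ Icc 1 n) :
    insert 0 (insert (n + 1) S) ⊆ Icc 0 (n + 1) := by
  intro s hs
  simp only [mem_insert] at hs
  rcases hs with rfl | rfl | hs
  · simp
  · simp
  · have := mem_Icc.1 (hS hs)
    exact mem_Icc.2 ⟨s.zero_le, by omega⟩

theorem gap_insert_zero_insert {n : ℕ} {S : Finset ℕ} (hk : k ≤ n + 1)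
    (hgap : ∀ s ∈ S, s ≤ j ∨ k ≤ s) : ∀ s ∈ insert 0 (insert (n + 1) S), s ≤ j ∨ k ≤ s := by
  simp only [mem_insert, forall_eq_or_imp]
  exact ⟨Or.inl j.zero_le, Or.inr hk, hgap⟩

end Finset

namespace GradedPoset

variable {P : GradedPoset}

instance : Nonempty P.carrier := ⟨P.bot⟩

theorem rank_strictMono : StrictMono P.rank := by
  classical
  let := Fintype.toLocallyFiniteOrder (α := P.carrier)
  exact (strictMono_iff_forall_covBy _).2 fun x y h => by rw [P.rank_covBy x y h]; omega

theorem eq_bot_of_rank_eq_zero {x : P.carrier} (hx : P.rank x = 0) : x = P.bot := by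
  by_contra hne
  have := rank_strictMono (lt_of_le_of_ne (P.bot_le x) (Ne.symm hne))
  rw [P.rank_bot] at this
  omega

theorem eq_top_of_rank_eq {x : P.carrier} (hx : P.rank x = P.rank P.top) : x = P.top := by
  by_contra hne
  have := rank_strictMono (lt_of_le_of_ne (P.le_top x) hne)
  omega

theorem lt_of_rank_lt {s : Set P.carrier} (hs : IsChain (· ≤ ·) s) {x y : P.carrier}
    (hx : x ∈ s) (hy : y ∈ s) (h : P.rank x < P.rank y) : x < y := by
  rcases hs.total hx hy with hxy | hyx
  · exact lt_of_le_of_ne hxy (by rintro rfl; omega)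
  · have := rank_strictMono.monotone hyx
    omega

theorem rank_injOn {s : Set P.carrier} (hs : IsChain (· ≤ ·) s) : Set.InjOn P.rank s := by
  intro x hx y hy h
  by_contra hne
  rcases hs.total hx hy with hxy | hyx
  · exact (rank_strictMono (lt_of_le_of_ne hxy hne)).ne h
  · exact (rank_strictMono (lt_of_le_of_ne hyx (Ne.symm hne))).ne' h

noncomputable def atRank (c : Finset P.carrier) (i : ℕ) : P.carrier :=
  Classical.epsilon fun x => x ∈ c ∧ P.rank x = i

theorem atRank_rank {c : Finset P.carrier} (hc : IsChain (· ≤ ·) (c : Set P.carrier))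
    {x : P.carrier} (hx : x ∈ c) : atRank c (P.rank x) = x :=
  have h := Classical.epsilon_spec (p := fun y => y ∈ c ∧ P.rank y = P.rank x) ⟨x, hx, rfl⟩
  rank_injOn hc h.1 hx h.2

def IsChainWithRanks (c : Finset P.carrier) (T : Finset ℕ) : Prop :=
  IsChain (· ≤ ·) (c : Set P.carrier) ∧ c.image P.rank = T

namespace IsChainWithRanks

variable {c d : Finset P.carrier} {T : Finset ℕ} {i j m : ℕ}

theorem rank_mem (hc : IsChainWithRanks c T) {x : P.carrier} (hx : x ∈ c) : P.rank x ∈ T :=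
  hc.2 ▸ mem_image_of_mem _ hx

theorem atRank_mem_rank (hc : IsChainWithRanks c T) (hi : i ∈ T) :
    atRank c i ∈ c ∧ P.rank (atRank c i) = i := by
  rw [← hc.2, mem_image] at hi
  exact Classical.epsilon_spec hi

theorem atRank_lt_atRank (hc : IsChainWithRanks c T) (hi : i ∈ T) (hj : j ∈ T) (hij : i < j) :
    atRank c i < atRank c j := by
  obtain ⟨hmi, hri⟩ := hc.atRank_mem_rank hi
  obtain ⟨hmj, hrj⟩ := hc.atRank_mem_rank hj
  exact lt_of_rank_lt hc.1 hmi hmj (by omega)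

theorem atRank_le_atRank (hc : IsChainWithRanks c T) (hi : i ∈ T) (hj : j ∈ T) (hij : i ≤ j) :
    atRank c i ≤ atRank c j := by
  rcases hij.eq_or_lt with rfl | h
  · exact le_rfl
  · exact (hc.atRank_lt_atRank hi hj h).le

theorem atRank_eq_of_subset (hd : IsChainWithRanks d T) (hc : IsChain (· ≤ ·) (c : Set P.carrier))
    (hdc : d ⊆ c) (hi : i ∈ T) : atRank d i = atRank c i := by
  obtain ⟨hmem, hrank⟩ := hd.atRank_mem_rank hi
  conv_rhs => rw [← hrank]
  exact (atRank_rank hc (hdc hmem)).symm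

theorem filter_rank_mem [DecidableEq P.carrier] {S : Finset ℕ} (hc : IsChainWithRanks c T)
    (hST : S ⊆ T) : IsChainWithRanks (c.filter fun x => P.rank x ∈ S) S := by
  refine ⟨hc.1.mono (coe_subset.2 (filter_subset _ _)), ?_⟩
  ext s
  simp only [mem_image, mem_filter]
  constructor
  · rintro ⟨x, ⟨-, hxS⟩, rfl⟩
    exact hxS
  · intro hs
    obtain ⟨hmem, hrank⟩ := hc.atRank_mem_rank (hST hs)
    exact ⟨atRank c s, ⟨hmem, by rwa [hrank]⟩, hrank⟩

theorem bot_mem (hc : IsChainWithRanks c (Icc 0 m)) : P.bot ∈ c := by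
  obtain ⟨hmem, hrank⟩ := hc.atRank_mem_rank (mem_Icc.2 ⟨le_rfl, m.zero_le⟩)
  rwa [eq_bot_of_rank_eq_zero hrank] at hmem

theorem top_mem (hP : P.rank P.top = m) (hc : IsChainWithRanks c (Icc 0 m)) : P.top ∈ c := by
  obtain ⟨hmem, hrank⟩ := hc.atRank_mem_rank (mem_Icc.2 ⟨m.zero_le, le_rfl⟩)
  rwa [eq_top_of_rank_eq (hrank.trans hP.symm)] at hmem

theorem image_atRank [DecidableEq P.carrier] (hc : IsChainWithRanks c T) :
    T.image (atRank c) = c := by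
  ext x
  simp only [mem_image]
  constructor
  · rintro ⟨i, hi, rfl⟩
    exact (hc.atRank_mem_rank hi).1
  · intro hx
    exact ⟨P.rank x, hc.rank_mem hx, atRank_rank hc.1 hx⟩

theorem image_Icc [DecidableEq P.carrier] {g : ℕ → P.carrier}
    (hrank : ∀ i ≤ m, P.rank (g i) = i) (hle : ∀ i < m, g i ≤ g (i + 1)) :
    IsChainWithRanks ((Icc 0 m).image g) (Icc 0 m) := by
  have hmono : ∀ i j, i ≤ j → j ≤ m → g i ≤ g j := by
    intro i j hij
    induction j, hij using Nat.le_induction with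
    | base => exact fun _ => le_rfl
    | succ j _ ih => exact fun hj => (ih (by omega)).trans (hle j (by omega))
  constructor
  · intro x hx y hy _
    obtain ⟨i, hi, rfl⟩ := mem_image.1 hx
    obtain ⟨j, hj, rfl⟩ := mem_image.1 hy
    rw [mem_Icc] at hi hj
    rcases le_total i j with hij | hji
    · exact Or.inl (hmono i j hij hj.2)
    · exact Or.inr (hmono j i hji hi.2)
  · ext k
    simp only [mem_image, mem_Icc]
    constructor
    · rintro ⟨_, ⟨i, hi, rfl⟩, rfl⟩
      rw [hrank i hi.2]
      exact hi
    · intro hk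
      exact ⟨g k, ⟨k, hk, rfl⟩, hrank k hk.2⟩

theorem atRank_image_Icc [DecidableEq P.carrier] {g : ℕ → P.carrier}
    (hrank : ∀ i ≤ m, P.rank (g i) = i) (hle : ∀ i < m, g i ≤ g (i + 1)) (hi : i ≤ m) :
    atRank ((Icc 0 m).image g) i = g i := by
  have := atRank_rank (image_Icc hrank hle).1 (mem_image_of_mem g (mem_Icc.2 ⟨i.zero_le, hi⟩))
  rwa [hrank i hi] at this

end IsChainWithRanks

section Truncate

variable {α : Type*} (g h : ℕ → α) (j k : ℕ)

def truncate : ℕ → α := fun i => g (max j (min k i))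

def splice : ℕ → α := fun i => if j ≤ i ∧ i ≤ k then h i else g i

variable {g h j k} {i : ℕ}

theorem truncate_of_le (hij : i ≤ j) : truncate g j k i = g j := by
  rw [truncate, max_eq_left ((min_le_right k i).trans hij)]

theorem truncate_of_mem (hji : j ≤ i) (hik : i ≤ k) : truncate g j k i = g i := by
  rw [truncate, min_eq_right hik, max_eq_right hji]

theorem truncate_of_ge (hjk : j ≤ k) (hki : k ≤ i) : truncate g j k i = g k := by
  rw [truncate, min_eq_left hki, max_eq_right hjk]

theorem truncate_congr {f : ℕ → α} (hjk : j ≤ k) (h : ∀ i, j ≤ i → i ≤ k → f i = g i) :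
    truncate f j k = truncate g j k :=
  funext fun _ => h _ (le_max_left _ _) (max_le hjk (min_le_left _ _))

theorem splice_of_mem (hji : j ≤ i) (hik : i ≤ k) : splice g h j k i = h i :=
  if_pos ⟨hji, hik⟩

theorem splice_of_lt (hij : i < j) : splice g h j k i = g i :=
  if_neg fun hi => by omega

theorem splice_of_gt (hki : k < i) : splice g h j k i = g i :=
  if_neg fun hi => by omega

end Truncate

/-- A saturated chain from `x` to `z` indexed by rank, extended constantly below `rank x` and
above `rank z`, so that it is determined by its values on `range N` once `rank z < N`. -/
structure IsSatChain (x z : P.carrier) (g : ℕ → P.carrier) : Prop where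
  eq_of_le : ∀ i ≤ P.rank x, g i = x
  eq_of_ge : ∀ i, P.rank z ≤ i → g i = z
  covBy : ∀ i, P.rank x ≤ i → i < P.rank z → g i ⋖ g (i + 1)

theorem isSatChain_const (x : P.carrier) : IsSatChain x x fun _ => x :=
  ⟨fun _ _ => rfl, fun _ _ => rfl, fun _ h1 h2 => absurd h2 (by omega)⟩

theorem isSatChain_truncate {g : ℕ → P.carrier} {j k : ℕ} (hjk : j ≤ k)
    (hrank : ∀ i, j ≤ i → i ≤ k → P.rank (g i) = i)
    (hcov : ∀ i, j ≤ i → i < k → g i ⋖ g (i + 1)) :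
    IsSatChain (g j) (g k) (truncate g j k) where
  eq_of_le i hi := truncate_of_le (by rwa [hrank j le_rfl hjk] at hi)
  eq_of_ge i hi := truncate_of_ge hjk (by rwa [hrank k hjk le_rfl] at hi)
  covBy i hji hik := by
    rw [hrank j le_rfl hjk] at hji
    rw [hrank k hjk le_rfl] at hik
    rw [truncate_of_mem hji hik.le, truncate_of_mem (by omega) hik]
    exact hcov i hji hik

namespace IsSatChain

variable {x w z : P.carrier} {g h : ℕ → P.carrier} {i j k : ℕ}

theorem rank_apply (hg : IsSatChain x z g) (hxi : P.rank x ≤ i) (hiz : i ≤ P.rank z) :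
    P.rank (g i) = i := by
  induction i, hxi using Nat.le_induction with
  | base => rw [hg.eq_of_le _ le_rfl]
  | succ i hxi ih => rw [P.rank_covBy _ _ (hg.covBy i hxi (by omega)), ih (by omega)]

theorem monotone (hg : IsSatChain x z g) : Monotone g := by
  refine monotone_nat_of_le_succ fun i => ?_
  by_cases h1 : i < P.rank x
  · rw [hg.eq_of_le i h1.le, hg.eq_of_le (i + 1) h1]
  by_cases h2 : P.rank z ≤ i
  · rw [hg.eq_of_ge i h2, hg.eq_of_ge (i + 1) (by omega)]
  exact (hg.covBy i (by omega) (by omega)).le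

theorem le (hg : IsSatChain x z g) : x ≤ z := by
  have := hg.monotone (le_max_left (P.rank x) (P.rank z))
  rwa [hg.eq_of_le _ le_rfl, hg.eq_of_ge _ (le_max_right _ _)] at this

theorem apply_eq_of_self (hg : IsSatChain x x g) (i : ℕ) : g i = x :=
  (le_total i (P.rank x)).elim (hg.eq_of_le i) (hg.eq_of_ge i)

theorem truncate (hg : IsSatChain x z g) (hxj : P.rank x ≤ j) (hjk : j ≤ k)
    (hkz : k ≤ P.rank z) : IsSatChain (g j) (g k) (truncate g j k) :=
  isSatChain_truncate hjk (fun _ h1 h2 => hg.rank_apply (by omega) (by omega))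
    (fun i h1 h2 => hg.covBy i (by omega) (by omega))

theorem cons (hxw : x ⋖ w) (hg : IsSatChain w z g) :
    IsSatChain x z fun i => if i ≤ P.rank x then x else g i := by
  have hw : P.rank w = P.rank x + 1 := P.rank_covBy _ _ hxw
  have hwz := rank_strictMono.monotone hg.le
  refine ⟨fun i hi => if_pos hi, fun i hi => ?_, fun i h1 h2 => ?_⟩
  · rw [if_neg (by omega), hg.eq_of_ge i hi]
  · rcases h1.eq_or_lt with rfl | h1
    · rw [if_pos le_rfl, if_neg (by omega), hg.eq_of_le _ hw.ge]
      exact hxw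
    · rw [if_neg (by omega), if_neg (by omega)]
      exact hg.covBy i (by omega) h2

theorem splice (hg : IsSatChain x z g) (hh : IsSatChain (g j) (g k) h) (hxj : P.rank x ≤ j)
    (hjk : j ≤ k) (hkz : k ≤ P.rank z) : IsSatChain x z (splice g h j k) := by
  have hj : P.rank (g j) = j := hg.rank_apply hxj (hjk.trans hkz)
  have hk : P.rank (g k) = k := hg.rank_apply (hxj.trans hjk) hkz
  have outside : ∀ i, i ≤ j ∨ k ≤ i → GradedPoset.splice g h j k i = g i := by
    intro i hi
    by_cases hin : j ≤ i ∧ i ≤ k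
    · rw [splice_of_mem hin.1 hin.2]
      obtain rfl | rfl : i = j ∨ i = k := by omega
      · exact hh.eq_of_le _ hj.ge
      · exact hh.eq_of_ge _ hk.le
    · exact if_neg hin
  refine ⟨fun i hi => ?_, fun i hi => ?_, fun i h1 h2 => ?_⟩
  · rw [outside i (Or.inl (hi.trans hxj)), hg.eq_of_le i hi]
  · rw [outside i (Or.inr (hkz.trans hi)), hg.eq_of_ge i hi]
  · by_cases hin : j ≤ i ∧ i < k
    · rw [splice_of_mem hin.1 hin.2.le, splice_of_mem (by omega) hin.2]
      exact hh.covBy i (by omega) (by omega)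
    · rw [outside i (by omega), outside (i + 1) (by omega)]
      exact hg.covBy i h1 h2

end IsSatChain

theorem exists_isSatChain {x z : P.carrier} (h : x ≤ z) : ∃ g, IsSatChain x z g := by
  induction hk : P.rank z - P.rank x generalizing x with
  | zero =>
    obtain rfl : x = z :=
      h.eq_or_lt.resolve_right fun hlt => by have := rank_strictMono hlt; omega
    exact ⟨_, isSatChain_const x⟩
  | succ k ih =>
    obtain ⟨w, hxw, hwz⟩ := exists_covBy_le_of_lt (h.lt_of_ne fun e => by subst e; omega)
    obtain ⟨g, hg⟩ := ih hwz (by rw [P.rank_covBy _ _ hxw]; omega)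
    exact ⟨_, hg.cons hxw⟩

/-- Elements are read as base-`|P|` digits: `weight N` is injective on `range N` and additive
over positions. -/
noncomputable def weight (N : ℕ) (g : ℕ → P.carrier) : ℕ :=
  ∑ i ∈ range N, (Fintype.equivFin P.carrier (g i) : ℕ) * Fintype.card P.carrier ^ i

theorem eq_of_weight_eq {N : ℕ} {g g' : ℕ → P.carrier} (h : weight N g = weight N g') {i : ℕ}
    (hi : i < N) : g i = g' i :=
  (Fintype.equivFin P.carrier).injective <| Fin.ext <| Nat.eq_of_sum_mul_pow_eq
    (fun i _ => (Fintype.equivFin _ (g i)).isLt) (fun i _ => (Fintype.equivFin _ (g' i)).isLt)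
    h i hi

theorem weight_add_weight_eq {N : ℕ} {a b c d : ℕ → P.carrier}
    (h : ∀ i, a i = c i ∧ b i = d i ∨ a i = d i ∧ b i = c i) :
    weight N a + weight N b = weight N c + weight N d := by
  simp only [weight, ← sum_add_distrib]
  refine sum_congr rfl fun i _ => ?_
  rcases h i with ⟨ha, hb⟩ | ⟨ha, hb⟩ <;> rw [ha, hb]
  ring

theorem weight_splice_add_weight_truncate {N : ℕ} {x z : P.carrier}
    {g h : ℕ → P.carrier} {j k : ℕ} (hg : IsSatChain x z g) (hh : IsSatChain (g j) (g k) h)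
    (hxj : P.rank x ≤ j) (hjk : j ≤ k) (hkz : k ≤ P.rank z) :
    weight N (splice g h j k) + weight N (truncate g j k) = weight N g + weight N h := by
  have hj : P.rank (g j) = j := hg.rank_apply hxj (hjk.trans hkz)
  have hk : P.rank (g k) = k := hg.rank_apply (hxj.trans hjk) hkz
  refine weight_add_weight_eq fun i => ?_
  by_cases hij : i < j
  · exact Or.inl ⟨splice_of_lt hij, by rw [truncate_of_le hij.le, hh.eq_of_le i (by omega)]⟩
  by_cases hki : k < i
  · exact Or.inl ⟨splice_of_gt hki, by rw [truncate_of_ge hjk hki.le, hh.eq_of_ge i (by omega)]⟩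
  exact Or.inr ⟨splice_of_mem (by omega) (by omega), truncate_of_mem (by omega) (by omega)⟩

def IsLightest (N : ℕ) (x z : P.carrier) (g : ℕ → P.carrier) : Prop :=
  IsSatChain x z g ∧ ∀ g', IsSatChain x z g' → weight N g ≤ weight N g'

namespace IsLightest

variable {N : ℕ} {x z : P.carrier} {g g' : ℕ → P.carrier}

theorem unique (hz : P.rank z < N) (hg : IsLightest N x z g) (hg' : IsLightest N x z g') :
    g = g' := by
  have hw := le_antisymm (hg.2 g' hg'.1) (hg'.2 g hg.1)
  funext i
  rcases lt_or_ge i N with hi | hi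
  · exact eq_of_weight_eq hw hi
  · rw [hg.1.eq_of_ge i (by omega), hg'.1.eq_of_ge i (by omega)]

/-- Splicing a lighter segment into `g` would give a lighter chain. -/
theorem truncate (hg : IsLightest N x z g) {j k : ℕ} (hxj : P.rank x ≤ j) (hjk : j ≤ k)
    (hkz : k ≤ P.rank z) : IsLightest N (g j) (g k) (truncate g j k) := by
  refine ⟨hg.1.truncate hxj hjk hkz, fun h hh => ?_⟩
  have := hg.2 _ (hg.1.splice hh hxj hjk hkz)
  have := weight_splice_add_weight_truncate (N := N) hg.1 hh hxj hjk hkz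
  omega

end IsLightest

theorem exists_isLightest (N : ℕ) {x z : P.carrier} (h : x ≤ z) : ∃ g, IsLightest N x z g := by
  classical
  have hex : ∃ w g, IsSatChain x z g ∧ weight N g = w :=
    let ⟨g, hg⟩ := exists_isSatChain h
    ⟨_, g, hg, rfl⟩
  obtain ⟨g, hg, hw⟩ := Nat.find_spec hex
  exact ⟨g, hg, fun g' hg' => hw ▸ Nat.find_min' hex ⟨g', hg', rfl⟩⟩

noncomputable def lightest (N : ℕ) (x z : P.carrier) : ℕ → P.carrier :=
  Classical.epsilon (IsLightest N x z)

theorem isLightest_lightest (N : ℕ) {x z : P.carrier} (h : x ≤ z) :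
    IsLightest N x z (lightest N x z) :=
  Classical.epsilon_spec (exists_isLightest N h)

theorem lightest_self (N : ℕ) (x : P.carrier) (i : ℕ) : lightest N x x i = x :=
  (isLightest_lightest N le_rfl).1.apply_eq_of_self i

def IsLightSegment (N : ℕ) (c : Finset P.carrier) (j k : ℕ) : Prop :=
  IsLightest N (atRank c j) (atRank c k) (truncate (atRank c) j k)

section Fill

variable {n : ℕ} {T : Finset ℕ} {d : Finset P.carrier}

/-- Completes the chain `d` with rank set `T` by the lightest saturated chain across each gap
of `T`. -/
noncomputable def fill (n : ℕ) (T : Finset ℕ) (d : Finset P.carrier) (i : ℕ) : P.carrier :=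
  lightest (n + 2) (atRank d (T.below i)) (atRank d (T.above i)) i

noncomputable def fillChain [DecidableEq P.carrier] (n : ℕ) (T : Finset ℕ)
    (d : Finset P.carrier) : Finset P.carrier :=
  (Icc 0 (n + 1)).image (fill n T d)

theorem fill_of_mem {i : ℕ} (hi : i ∈ T) : fill n T d i = atRank d i := by
  rw [fill, below_self hi, above_self hi, lightest_self]

theorem fill_eq_of_gap (hd : IsChainWithRanks d T) {p q i : ℕ} (hp : p ∈ T) (hq : q ∈ T)
    (hgap : ∀ s ∈ T, s ≤ p ∨ q ≤ s) (hpi : p ≤ i) (hiq : i ≤ q) :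
    fill n T d i = lightest (n + 2) (atRank d p) (atRank d q) i := by
  by_cases hi : i ∈ T
  · have hlight := isLightest_lightest (n + 2) (hd.atRank_le_atRank hp hq (hpi.trans hiq))
    rw [fill_of_mem hi]
    rcases hgap i hi with h | h
    · obtain rfl : i = p := le_antisymm h hpi
      exact (hlight.1.eq_of_le i (hd.atRank_mem_rank hi).2.ge).symm
    · obtain rfl : i = q := le_antisymm hiq h
      exact (hlight.1.eq_of_ge i (hd.atRank_mem_rank hi).2.le).symm
  · obtain ⟨hb, ha⟩ := below_eq_and_above_eq hp hq hgap hpi hiq hi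
    rw [fill, hb, ha]

theorem exists_isLightest_fill_eqOn (hd : IsChainWithRanks d T) (h0 : 0 ∈ T)
    (htop : n + 1 ∈ T) {i j : ℕ} (hij : i ≤ j) (hj : j ≤ n + 1)
    (hgap : ∀ s ∈ T, s ≤ i ∨ j ≤ s) :
    ∃ p q g, p ≤ i ∧ j ≤ q ∧ q ≤ n + 1 ∧ P.rank (atRank d p) = p ∧ P.rank (atRank d q) = q ∧
      IsLightest (n + 2) (atRank d p) (atRank d q) g ∧ ∀ l, p ≤ l → l ≤ q → fill n T d l = g l := by
  obtain ⟨hp, hpi⟩ := below_mem_le h0 i.zero_le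
  obtain ⟨hq, hjq⟩ := above_mem_ge htop hj
  refine ⟨T.below i, T.above j, _, hpi, hjq, above_le htop hj, (hd.atRank_mem_rank hp).2,
    (hd.atRank_mem_rank hq).2, isLightest_lightest (n + 2) (hd.atRank_le_atRank hp hq (by omega)),
    fun l h1 h2 => fill_eq_of_gap hd hp hq (below_above_gap hgap) h1 h2⟩

theorem rank_fill (hd : IsChainWithRanks d T) (h0 : 0 ∈ T) (htop : n + 1 ∈ T) {i : ℕ}
    (hi : i ≤ n + 1) : P.rank (fill n T d i) = i := by
  obtain ⟨p, q, g, hpi, hiq, -, hp, hq, hg, hfill⟩ :=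
    exists_isLightest_fill_eqOn hd h0 htop le_rfl hi fun s _ => le_total s i
  rw [hfill i hpi hiq, hg.1.rank_apply (by omega) (by omega)]

theorem fill_covBy (hd : IsChainWithRanks d T) (h0 : 0 ∈ T) (htop : n + 1 ∈ T) {i : ℕ}
    (hi : i < n + 1) : fill n T d i ⋖ fill n T d (i + 1) := by
  obtain ⟨p, q, g, hpi, hiq, -, hp, hq, hg, hfill⟩ :=
    exists_isLightest_fill_eqOn hd h0 htop i.le_succ hi fun s _ => by omega
  rw [hfill i hpi (by omega), hfill (i + 1) (by omega) hiq]
  exact hg.1.covBy i (by omega) (by omega)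

theorem isChainWithRanks_fillChain [DecidableEq P.carrier]
    (hd : IsChainWithRanks d T) (h0 : 0 ∈ T) (htop : n + 1 ∈ T) :
    IsChainWithRanks (fillChain n T d) (Icc 0 (n + 1)) :=
  IsChainWithRanks.image_Icc (fun _ hi => rank_fill hd h0 htop hi)
    fun _ hi => (fill_covBy hd h0 htop hi).le

theorem atRank_fillChain [DecidableEq P.carrier]
    (hd : IsChainWithRanks d T) (h0 : 0 ∈ T) (htop : n + 1 ∈ T)
    {i : ℕ} (hi : i ≤ n + 1) : atRank (fillChain n T d) i = fill n T d i :=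
  IsChainWithRanks.atRank_image_Icc (fun _ hi => rank_fill hd h0 htop hi)
    (fun _ hi => (fill_covBy hd h0 htop hi).le) hi

theorem filter_fillChain [DecidableEq P.carrier]
    (hd : IsChainWithRanks d T) (h0 : 0 ∈ T) (htop : n + 1 ∈ T)
    (hT : T ⊆ Icc 0 (n + 1)) :
    (fillChain n T d).filter (fun x => P.rank x ∈ T) = d := by
  ext x
  simp only [fillChain, mem_filter, mem_image, mem_Icc]
  constructor
  · rintro ⟨⟨i, hi, rfl⟩, hiT⟩
    rw [rank_fill hd h0 htop hi.2] at hiT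
    rw [fill_of_mem hiT]
    exact (hd.atRank_mem_rank hiT).1
  · intro hx
    have hxT := hd.rank_mem hx
    refine ⟨⟨P.rank x, ⟨(P.rank x).zero_le, (mem_Icc.1 (hT hxT)).2⟩, ?_⟩, hxT⟩
    rw [fill_of_mem hxT, atRank_rank hd.1 hx]

theorem isLightSegment_fillChain [DecidableEq P.carrier]
    (hd : IsChainWithRanks d T) (h0 : 0 ∈ T) (htop : n + 1 ∈ T)
    {j k : ℕ} (hjk : j ≤ k) (hk : k ≤ n + 1) (hgap : ∀ s ∈ T, s ≤ j ∨ k ≤ s) :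
    IsLightSegment (n + 2) (fillChain n T d) j k := by
  obtain ⟨p, q, g, hpj, hkq, -, hp, hq, hg, hfill⟩ :=
    exists_isLightest_fill_eqOn hd h0 htop hjk hk hgap
  have hat : ∀ l, j ≤ l → l ≤ k → atRank (fillChain n T d) l = g l := fun l h1 h2 => by
    rw [atRank_fillChain hd h0 htop (by omega), hfill l (by omega) (by omega)]
  rw [IsLightSegment, truncate_congr hjk hat, hat j le_rfl hjk, hat k hjk le_rfl]
  exact hg.truncate (by omega) hjk (by omega)

theorem fillChain_eq [DecidableEq P.carrier]
    (hd : IsChainWithRanks d T) (h0 : 0 ∈ T) (htop : n + 1 ∈ T)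
    {c : Finset P.carrier} (hc : IsChainWithRanks c (Icc 0 (n + 1)))
    (hdc : d ⊆ c) (hlight : ∀ j k, j + 1 < k → k ≤ n + 1 → (∀ s ∈ T, s ≤ j ∨ k ≤ s) →
      IsLightSegment (n + 2) c j k) : fillChain n T d = c := by
  have hfill : ∀ i ∈ Icc 0 (n + 1), fill n T d i = atRank c i := by
    intro i hi
    rw [mem_Icc] at hi
    by_cases hiT : i ∈ T
    · rw [fill_of_mem hiT, hd.atRank_eq_of_subset hc.1 hdc hiT]
    obtain ⟨hp, hpi⟩ := below_mem_le h0 i.zero_le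
    obtain ⟨hq, hiq⟩ := above_mem_ge htop hi.2
    have hpi' : T.below i ≠ i := fun h => hiT (h ▸ hp)
    have hiq' : T.above i ≠ i := fun h => hiT (h ▸ hq)
    have hqn := above_le htop hi.2
    have hseg := hlight _ _ (by omega) hqn (below_above_gap fun s _ => le_total s i)
    have hrank : P.rank (atRank c (T.above i)) < n + 2 := by
      rw [(hc.atRank_mem_rank (mem_Icc.2 ⟨(T.above i).zero_le, hqn⟩)).2]
      omega
    rw [fill, hd.atRank_eq_of_subset hc.1 hdc hp, hd.atRank_eq_of_subset hc.1 hdc hq,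
      ← hseg.unique hrank (isLightest_lightest _ hseg.1.le), truncate_of_mem hpi hiq]
  rw [fillChain, image_congr hfill, hc.image_atRank]

end Fill

open Classical in
noncomputable def badIntervals (n : ℕ) (c : Finset P.carrier) : Finset (Finset ℕ) :=
  ((Icc 1 n ×ˢ Icc 1 n).filter fun ab =>
    ab.1 ≤ ab.2 ∧ ¬IsLightSegment (n + 2) c (ab.1 - 1) (ab.2 + 1)).image fun ab => Icc ab.1 ab.2

variable {n : ℕ} {S : Finset ℕ} {c : Finset P.carrier}

theorem mem_badIntervals {I : Finset ℕ} :
    I ∈ badIntervals n c ↔ ∃ a b, 1 ≤ a ∧ a ≤ b ∧ b ≤ n ∧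
      ¬IsLightSegment (n + 2) c (a - 1) (b + 1) ∧ Icc a b = I := by
  simp only [badIntervals, mem_image, mem_filter, mem_product, mem_Icc, Prod.exists]
  constructor
  · rintro ⟨a, b, ⟨⟨⟨ha, -⟩, -, hb⟩, hab, hbad⟩, rfl⟩
    exact ⟨a, b, ha, hab, hb, hbad, rfl⟩
  · rintro ⟨a, b, ha, hab, hb, hbad, rfl⟩
    exact ⟨a, b, ⟨⟨⟨ha, by omega⟩, by omega, hb⟩, hab, hbad⟩, rfl⟩

theorem blocks_badIntervals_iff :
    (∀ I ∈ badIntervals n c, (S ∩ I).Nonempty) ↔ ∀ j k, j + 1 < k → k ≤ n + 1 →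
      (∀ s ∈ S, s ≤ j ∨ k ≤ s) → IsLightSegment (n + 2) c j k := by
  constructor
  · intro h j k hjk hk hgap
    by_contra hbad
    have hbad' : ¬IsLightSegment (n + 2) c (j + 1 - 1) (k - 1 + 1) := by
      rwa [Nat.add_sub_cancel, Nat.sub_add_cancel (by omega)]
    obtain ⟨s, hs⟩ :=
      h _ (mem_badIntervals.2 ⟨j + 1, k - 1, by omega, by omega, by omega, hbad', rfl⟩)
    rw [mem_inter, mem_Icc] at hs
    rcases hgap s hs.1 with h' | h' <;> omega
  · intro h I hI
    obtain ⟨a, b, ha, hab, hb, hbad, rfl⟩ := mem_badIntervals.1 hI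
    by_contra hempty
    refine hbad (h _ _ (by omega) (by omega) fun s hs => ?_)
    by_contra! hs'
    exact hempty ⟨s, mem_inter.2 ⟨hs, mem_Icc.2 ⟨by omega, by omega⟩⟩⟩

noncomputable def completion [DecidableEq P.carrier] (n : ℕ) (S : Finset ℕ)
    (c : Finset P.carrier) : Finset P.carrier :=
  fillChain n (insert 0 (insert (n + 1) S)) (insert P.bot (insert P.top c))

theorem isChainWithRanks_insert_bot_top [DecidableEq P.carrier] (hP : P.rank P.top = n + 1)
    (hc : IsChainWithRanks c S) :
    IsChainWithRanks (insert P.bot (insert P.top c)) (insert 0 (insert (n + 1) S)) := by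
  refine ⟨?_, by rw [image_insert, image_insert, P.rank_bot, hP, hc.2]⟩
  rw [coe_insert, coe_insert]
  exact (hc.1.insert fun b _ _ => Or.inr (P.le_top b)).insert fun b _ _ => Or.inl (P.bot_le b)

variable [DecidableEq P.carrier]

theorem isChainWithRanks_completion (hP : P.rank P.top = n + 1) (hc : IsChainWithRanks c S) :
    IsChainWithRanks (completion n S c) (Icc 0 (n + 1)) :=
  isChainWithRanks_fillChain (isChainWithRanks_insert_bot_top hP hc) (by simp) (by simp)

theorem blocks_badIntervals_completion (hP : P.rank P.top = n + 1) (hc : IsChainWithRanks c S) :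
    ∀ I ∈ badIntervals n (completion n S c), (S ∩ I).Nonempty :=
  blocks_badIntervals_iff.2 fun _ _ hjk hk hgap =>
    isLightSegment_fillChain (isChainWithRanks_insert_bot_top hP hc) (by simp) (by simp)
      (by omega) hk (gap_insert_zero_insert hk hgap)

theorem filter_completion (hP : P.rank P.top = n + 1) (hS : S ⊆ Icc 1 n)
    (hc : IsChainWithRanks c S) : (completion n S c).filter (fun x => P.rank x ∈ S) = c := by
  have hends := filter_fillChain (isChainWithRanks_insert_bot_top hP hc) (by simp)
    (by simp) (insert_zero_insert_subset_Icc hS)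
  have hbot : P.rank P.bot ∉ S := fun h => by simpa [P.rank_bot] using hS h
  have htop : P.rank P.top ∉ S := fun h => by have := mem_Icc.1 (hS h); omega
  calc (completion n S c).filter (fun x => P.rank x ∈ S)
      = ((completion n S c).filter fun x => P.rank x ∈ insert 0 (insert (n + 1) S)).filter
          fun x => P.rank x ∈ S := by
        rw [filter_filter]
        exact filter_congr fun x _ => ⟨fun h => ⟨mem_insert_of_mem (mem_insert_of_mem h), h⟩,
          And.right⟩
    _ = c := by
        rw [completion, hends, filter_insert, filter_insert, if_neg hbot, if_neg htop,
          filter_true_of_mem fun _ => hc.rank_mem]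

theorem completion_filter_eq (hP : P.rank P.top = n + 1) (hS : S ⊆ Icc 1 n)
    (hc : IsChainWithRanks c (Icc 0 (n + 1)))
    (hblock : ∀ I ∈ badIntervals n c, (S ∩ I).Nonempty) :
    completion n S (c.filter fun x => P.rank x ∈ S) = c := by
  have hsub : insert P.bot (insert P.top (c.filter fun x => P.rank x ∈ S)) ⊆ c :=
    insert_subset hc.bot_mem (insert_subset (hc.top_mem hP) (filter_subset _ _))
  refine fillChain_eq (isChainWithRanks_insert_bot_top hP (hc.filter_rank_mem ?_))
    (by simp) (by simp) hc hsub fun j k hjk hk hgap =>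
      blocks_badIntervals_iff.1 hblock j k hjk hk fun s hs =>
        hgap s (mem_insert_of_mem (mem_insert_of_mem hs))
  exact hS.trans (Icc_subset_Icc (Nat.zero_le 1) n.le_succ)

theorem setOf_blocks_badIntervals_eq_image (hP : P.rank P.top = n + 1) (hS : S ⊆ Icc 1 n) :
    {c : Finset P.carrier | IsChainWithRanks c (Icc 0 (n + 1)) ∧
        ∀ I ∈ badIntervals n c, (S ∩ I).Nonempty} =
      completion n S '' {c | IsChainWithRanks c S} := by
  ext c
  constructor
  · rintro ⟨hc, hblock⟩
    exact ⟨_, hc.filter_rank_mem (hS.trans (Icc_subset_Icc (Nat.zero_le 1) n.le_succ)),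
      completion_filter_eq hP hS hc hblock⟩
  · rintro ⟨c, hc, rfl⟩
    exact ⟨isChainWithRanks_completion hP hc, blocks_badIntervals_completion hP hc⟩

theorem injOn_completion (hP : P.rank P.top = n + 1) (hS : S ⊆ Icc 1 n) :
    Set.InjOn (completion (P := P) n S) {c | IsChainWithRanks c S} := fun _ h₁ _ h₂ h => by
  rw [← filter_completion hP hS h₁, h, filter_completion hP hS h₂]

end GradedPoset

theorem stmt_2_general (n : ℕ) (P : GradedPoset) (hP : P.rank P.top = n + 1) :
    ∃ ℐ : Finset P.carrier → Finset (Finset ℕ),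
      (∀ c : Finset P.carrier,
          (IsChain (· ≤ ·) (↑c : Set P.carrier) ∧ c.image P.rank = Finset.Icc 0 (n + 1)) →
          ∀ I ∈ ℐ c, ∃ p q : ℕ, 1 ≤ p ∧ p ≤ q ∧ q ≤ n ∧ I = Finset.Icc p q) ∧
      ∀ S ⊆ Finset.Icc 1 n,
        Set.ncard {c : Finset P.carrier |
            (IsChain (· ≤ ·) (↑c : Set P.carrier) ∧ c.image P.rank = Finset.Icc 0 (n + 1)) ∧
            ∀ I ∈ ℐ c, (S ∩ I).Nonempty} = flagNum P S := by
  classical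
  refine ⟨GradedPoset.badIntervals n, fun c _ I hI => ?_, fun S hS => ?_⟩
  · obtain ⟨a, b, ha, hab, hb, -, rfl⟩ := GradedPoset.mem_badIntervals.1 hI
    exact ⟨a, b, ha, hab, hb, rfl⟩
  · exact (congrArg Set.ncard (GradedPoset.setOf_blocks_badIntervals_eq_image hP hS)).trans
      (GradedPoset.injOn_completion hP hS).ncard_image

theorem stmt_2 (n : ℕ) (hn : 1 ≤ n) (P : GradedPoset) (hP : P.rank P.top = n + 1) :
    ∃ ℐ : Finset P.carrier → Finset (Finset ℕ),
      (∀ c : Finset P.carrier,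
          (IsChain (· ≤ ·) (↑c : Set P.carrier) ∧ c.image P.rank = Finset.Icc 0 (n + 1)) →
          ∀ I ∈ ℐ c, ∃ p q : ℕ, 1 ≤ p ∧ p ≤ q ∧ q ≤ n ∧ I = Finset.Icc p q) ∧
      ∀ S ⊆ Finset.Icc 1 n,
        Set.ncard {c : Finset P.carrier |
            (IsChain (· ≤ ·) (↑c : Set P.carrier) ∧ c.image P.rank = Finset.Icc 0 (n + 1)) ∧
            ∀ I ∈ ℐ c, (S ∩ I).Nonempty} = flagNum P S :=
  stmt_2_general n P hP
end

section
/- For every family 𝒮 of subsets of a finite set X, B_X(B_X(𝒮)) = 𝒮^+. -/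
theorem stmt_9 {X : Type*} [Fintype X] (𝒮 : Set (Set X)) :
    {T : Set X | ∀ B ∈ {B : Set X | ∀ S ∈ 𝒮, (B ∩ S).Nonempty}, (T ∩ B).Nonempty} =
      {T : Set X | ∃ S ∈ 𝒮, S ⊆ T} := by
  ext T
  simp only [Set.mem_setOf_eq]
  constructor
  · intro h
    by_contra hc
    push_neg at hc
    have hB : ∀ S ∈ 𝒮, (Tᶜ ∩ S).Nonempty := by
      intro S hS
      obtain ⟨x, hxS, hxT⟩ := Set.not_subset.mp (hc S hS)
      exact ⟨x, hxT, hxS⟩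
    obtain ⟨x, hxT, hxTc⟩ := h Tᶜ hB
    exact hxTc hxT
  · rintro ⟨S, hS, hST⟩ B hB
    obtain ⟨x, hxB, hxS⟩ := hB S hS
    exact ⟨x, hST hxS, hxB⟩
end

section
/- For every graded poset P of rank 3, f_{{1,3}}(P) − f_{{1}}(P) + f_{{2}}(P) − f_{{3}}(P) ≥ 0. -/
namespace GradedPoset

lemma rank_lt (P : GradedPoset) : ∀ y x : P.carrier, x < y → P.rank x < P.rank y := by
  intro y
  induction y using WellFoundedLT.induction with
  | _ y ih =>
    intro x hxy
    obtain ⟨z, hxz, hzy⟩ := exists_le_covBy_of_lt hxy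
    have h1 := P.rank_covBy z y hzy
    rcases eq_or_lt_of_le hxz with rfl | h
    · omega
    · have := ih z hzy.lt x h; omega

lemma exists_rank_le (P : GradedPoset) :
    ∀ z : P.carrier, ∀ j, j ≤ P.rank z → ∃ w, w ≤ z ∧ P.rank w = j := by
  intro z
  induction z using WellFoundedLT.induction with
  | _ z ih =>
    intro j hj
    rcases eq_or_lt_of_le hj with rfl | h
    · exact ⟨z, le_rfl, rfl⟩
    · have hz : z ≠ P.bot := by
        rintro rfl; rw [P.rank_bot] at h; omega
      have hbz : P.bot < z := lt_of_le_of_ne (P.bot_le z) (Ne.symm hz)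
      obtain ⟨w, -, hwz⟩ := exists_le_covBy_of_lt hbz
      have h1 := P.rank_covBy w z hwz
      obtain ⟨u, huw, hu⟩ := ih w hwz.lt j (by omega)
      exact ⟨u, le_trans huw hwz.le, hu⟩

/-- A choice of an element of rank 1 below `z` (when `rank z ≥ 1`). -/
noncomputable def pick (P : GradedPoset) (z : P.carrier) : P.carrier :=
  if h : 1 ≤ P.rank z then (P.exists_rank_le z 1 h).choose else z

lemma pick_spec (P : GradedPoset) {z : P.carrier} (h : 1 ≤ P.rank z) :
    P.pick z ≤ z ∧ P.rank (P.pick z) = 1 := by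
  rw [pick, dif_pos h]
  exact (P.exists_rank_le z 1 h).choose_spec

lemma flagNum_singleton (P : GradedPoset) (i : ℕ) :
    flagNum P {i} = Set.ncard {x : P.carrier | P.rank x = i} := by
  have hset : {c : Finset P.carrier |
      IsChain (· ≤ ·) (↑c : Set P.carrier) ∧ c.image P.rank = {i}}
      = (fun x => ({x} : Finset P.carrier)) '' {x : P.carrier | P.rank x = i} := by
    ext c
    constructor
    · rintro ⟨hc, him⟩
      have hne : c.Nonempty := by
        by_contra hne
        rw [Finset.not_nonempty_iff_eq_empty] at hne
        rw [hne, Finset.image_empty] at him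
        exact (Finset.singleton_ne_empty i) him.symm
      obtain ⟨x, hx⟩ := hne
      have hrank : ∀ b ∈ c, P.rank b = i := by
        intro b hb
        have : P.rank b ∈ c.image P.rank := Finset.mem_image_of_mem _ hb
        rw [him] at this; simpa using this
      refine ⟨x, hrank x hx, Eq.symm ?_⟩
      ext b
      simp only [Finset.mem_singleton]
      constructor
      · intro hb
        by_contra hbx
        rcases hc (Finset.mem_coe.mpr hb) (Finset.mem_coe.mpr hx) hbx with h | h
        · have := P.rank_lt x b (lt_of_le_of_ne h hbx)
          rw [hrank x hx, hrank b hb] at this; omega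
        · have := P.rank_lt b x (lt_of_le_of_ne h (Ne.symm hbx))
          rw [hrank x hx, hrank b hb] at this; omega
      · rintro rfl; exact hx
    · rintro ⟨x, hx, rfl⟩
      refine ⟨?_, by rw [Finset.image_singleton, show P.rank x = i from hx]⟩
      simp only [Finset.coe_singleton]
      exact Set.Subsingleton.isChain (Set.subsingleton_singleton)
  rw [flagNum, hset, Set.ncard_image_of_injOn]
  intro a _ b _ h
  simpa using h

lemma flagNum_pair (P : GradedPoset) (hP : P.rank P.top = 3) :
    Set.ncard {x : P.carrier | P.rank x = 1}
      + Set.ncard {x : P.carrier | P.rank x = 3}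
      ≤ flagNum P {1, 3} + 1 := by
  classical
  set S13 := {c : Finset P.carrier |
      IsChain (· ≤ ·) (↑c : Set P.carrier) ∧ c.image P.rank = ({1, 3} : Finset ℕ)} with hS13
  set A := {x : P.carrier | P.rank x = 1} with hA
  set C := {x : P.carrier | P.rank x = 3} with hC
  set T : Set (P.carrier × P.carrier) :=
    {p | P.rank p.1 = 1 ∧ P.rank p.2 = 3 ∧ p.1 ≤ p.2} with hT
  have hg : Set.InjOn (fun p : P.carrier × P.carrier => ({p.1, p.2} : Finset P.carrier)) T := by
    rintro ⟨x, z⟩ ⟨h1, h3, -⟩ ⟨x', z'⟩ ⟨h1', h3', -⟩ he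
    simp only at he
    have hx : x ∈ ({x', z'} : Finset P.carrier) := by
      rw [← he]; simp
    have hz : z ∈ ({x', z'} : Finset P.carrier) := by
      rw [← he]; simp
    simp only [Finset.mem_insert, Finset.mem_singleton] at hx hz
    have hxx : x = x' := by
      rcases hx with h | h
      · exact h
      · rw [h, h3'] at h1; omega
    have hzz : z = z' := by
      rcases hz with h | h
      · rw [h, h1'] at h3; omega
      · exact h
    simp [hxx, hzz]
  have hsub : (fun p : P.carrier × P.carrier => ({p.1, p.2} : Finset P.carrier)) '' T ⊆ S13 := by
    rintro - ⟨⟨x, z⟩, ⟨h1, h3, hle⟩, rfl⟩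
    constructor
    · intro a ha b hb hab
      simp only [Finset.coe_insert, Finset.coe_singleton, Set.mem_insert_iff,
        Set.mem_singleton_iff] at ha hb
      rcases ha with rfl | rfl <;> rcases hb with rfl | rfl
      · exact absurd rfl hab
      · exact Or.inl hle
      · exact Or.inr hle
      · exact absurd rfl hab
    · have hxz : x ≠ z := by intro h; rw [h, h3] at h1; omega
      rw [Finset.image_insert, Finset.image_singleton, h1, h3]
  have hTcard : A.ncard + (C.ncard - 1) ≤ T.ncard := by
    set T1 : Set (P.carrier × P.carrier) := (fun x => (x, P.top)) '' A with hT1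
    set T2 : Set (P.carrier × P.carrier) := (fun z => (P.pick z, z)) '' (C \ {P.top}) with hT2
    have hT1sub : T1 ⊆ T := by
      rintro - ⟨x, hx, rfl⟩
      exact ⟨hx, hP, P.le_top x⟩
    have hT2sub : T2 ⊆ T := by
      rintro - ⟨z, ⟨hz, -⟩, rfl⟩
      have hp := P.pick_spec (z := z) (by rw [hz]; omega)
      exact ⟨hp.2, hz, hp.1⟩
    have hdisj : Disjoint T1 T2 := by
      rw [Set.disjoint_left]
      rintro - ⟨x, hx, rfl⟩ ⟨z, ⟨-, hz⟩, he⟩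
      exact hz (congrArg Prod.snd he)
    have hc1 : T1.ncard = A.ncard :=
      Set.ncard_image_of_injOn (fun a _ b _ h => by simpa using congrArg Prod.fst h)
    have hc2 : T2.ncard = C.ncard - 1 := by
      rw [Set.ncard_image_of_injOn (fun a _ b _ h => by simpa using congrArg Prod.snd h)]
      rw [Set.ncard_diff_singleton_of_mem (by simpa [hC] using hP)]
    calc A.ncard + (C.ncard - 1) = T1.ncard + T2.ncard := by rw [hc1, hc2]
      _ = (T1 ∪ T2).ncard := (Set.ncard_union_eq hdisj (Set.toFinite _) (Set.toFinite _)).symm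
      _ ≤ T.ncard := Set.ncard_le_ncard (Set.union_subset hT1sub hT2sub) (Set.toFinite _)
  have hCpos : 1 ≤ C.ncard :=
    (Set.ncard_pos (Set.toFinite _)).mpr ⟨P.top, by simpa [hC] using hP⟩
  have himg : T.ncard ≤ S13.ncard := by
    rw [← Set.ncard_image_of_injOn hg]
    exact Set.ncard_le_ncard hsub (Set.toFinite _)
  have : flagNum P {1, 3} = S13.ncard := rfl
  omega

end GradedPoset

theorem stmt_11 (P : GradedPoset) (hP : P.rank P.top = 3) :
    0 ≤ (flagNum P {1, 3} : ℝ) - flagNum P {1} + flagNum P {2} - flagNum P {3} := by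
  have h1 := P.flagNum_singleton 1
  have h2 := P.flagNum_singleton 2
  have h3 := P.flagNum_singleton 3
  have hpair := P.flagNum_pair hP

  have hb : 1 ≤ flagNum P {2} := by
    obtain ⟨w, -, hw⟩ := P.exists_rank_le P.top 2 (by omega)
    rw [h2]
    exact (Set.ncard_pos (Set.toFinite _)).mpr ⟨w, hw⟩
  have key : flagNum P {1} + flagNum P {3} ≤ flagNum P {1, 3} + 1 := by
    rw [h1, h3]; exact hpair
  have key2 : (flagNum P {1} : ℝ) + flagNum P {3} ≤ (flagNum P {1, 3} : ℝ) + 1 := by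
    exact_mod_cast key
  have hb2 : (1 : ℝ) ≤ flagNum P {2} := by exact_mod_cast hb
  linarith
end

section
/- Let m ≥ 1 and n ≥ 2, and let a ∈ ℝ^{2^{m−1}} (indexed by subsets of {1,…,m−1}) and b ∈ ℝ^{2^{n−1}} (indexed by subsets of {1,…,n−1}). Then for every k ∈ {0, 1, …, m+n−1}, π^{m+n}_k(a ∗ b) = a ∗ π^n_{k−m}(b), where by convention π^n_{k−m} := π^n_0 whenever k < m. -/
/-- The projection `π^{n+1}_m : ℝ^{2^n} → ℝ^{2^{n-1}}`: the coordinate at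
`S ⊆ {1,…,n-1}` is `χ((S ∪ {0}) ∩ {m,…,n-1} ≠ ∅) · a_S + a_{S ∪ {n}}`. -/
noncomputable def proj (n m : ℕ) (a : Finset ℕ → ℝ) : Finset ℕ → ℝ := fun S =>
  if S ⊆ Finset.Icc 1 (n - 1) then
    (if ((insert 0 S) ∩ Finset.Icc m (n - 1)).Nonempty then a S else 0) + a (insert n S)
  else 0

/-- The convolution `a ∗ b ∈ ℝ^{2^{m+n-1}}` of `a ∈ ℝ^{2^{m-1}}` and `b ∈ ℝ^{2^{n-1}}`:
the coordinate at `U ⊆ {1,…,m+n-1}` is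
`a_{U ∩ {1,…,m-1}} · b_{(U ∩ {m+1,…,m+n-1}) - m}` when `m ∈ U`, and `0` otherwise. -/
noncomputable def conv (m n : ℕ) (a b : Finset ℕ → ℝ) : Finset ℕ → ℝ := fun U =>
  if m ∈ U ∧ U ⊆ Finset.Icc 1 (m + n - 1) then
    a (U ∩ Finset.Icc 1 (m - 1)) *
      b ((U ∩ Finset.Icc (m + 1) (m + n - 1)).image (fun i => i - m))
  else 0

theorem stmt_13 (m n : ℕ) (hm : 1 ≤ m) (hn : 2 ≤ n) (a b : Finset ℕ → ℝ)
    (ha : ∀ S : Finset ℕ, ¬ S ⊆ Finset.Icc 1 (m - 1) → a S = 0)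
    (hb : ∀ T : Finset ℕ, ¬ T ⊆ Finset.Icc 1 (n - 1) → b T = 0)
    (k : ℕ) (hk : k ≤ m + n - 1) :
    proj (m + n - 1) k (conv m n a b) = conv m (n - 1) a (proj (n - 1) (k - m) b) := by
  funext U
  have e1 : m + n - 1 - 1 = m + n - 2 := by omega
  have e2 : m + (n - 1) - 1 = m + n - 2 := by omega
  have e3 : n - 1 - 1 = n - 2 := by omega
  by_cases hU2 : U ⊆ Finset.Icc 1 (m + n - 2)
  · by_cases hmU : m ∈ U
    · -- main case
      have hUN : U ⊆ Finset.Icc 1 (m + n - 1) :=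
        hU2.trans (Finset.Icc_subset_Icc_right (by omega))
      have hmem : m + n - 1 ∈ Finset.Icc 1 (m + n - 1) := by
        rw [Finset.mem_Icc]; omega
      have hins : insert (m + n - 1) U ⊆ Finset.Icc 1 (m + n - 1) :=
        Finset.insert_subset hmem hUN
      have hA : insert (m + n - 1) U ∩ Finset.Icc 1 (m - 1) = U ∩ Finset.Icc 1 (m - 1) :=
        Finset.insert_inter_of_notMem (by rw [Finset.mem_Icc]; omega)
      have hmid : U ∩ Finset.Icc (m + 1) (m + n - 1) = U ∩ Finset.Icc (m + 1) (m + n - 2) := by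
        ext x
        simp only [Finset.mem_inter, Finset.mem_Icc, and_congr_right_iff]
        intro hx
        have := Finset.mem_Icc.mp (hU2 hx)
        omega
      have hT : insert (m + n - 1) U ∩ Finset.Icc (m + 1) (m + n - 1)
          = insert (m + n - 1) (U ∩ Finset.Icc (m + 1) (m + n - 2)) := by
        rw [Finset.insert_inter_of_mem (by rw [Finset.mem_Icc]; omega), hmid]
      have himg : (insert (m + n - 1) (U ∩ Finset.Icc (m + 1) (m + n - 2))).image (fun i => i - m)
          = insert (n - 1) ((U ∩ Finset.Icc (m + 1) (m + n - 2)).image (fun i => i - m)) := by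
        rw [Finset.image_insert]
        congr 1
        omega
      have hTsub : (U ∩ Finset.Icc (m + 1) (m + n - 2)).image (fun i => i - m)
          ⊆ Finset.Icc 1 (n - 2) := by
        intro t ht
        obtain ⟨x, hx, rfl⟩ := Finset.mem_image.mp ht
        obtain ⟨hx1, hx2⟩ := Finset.mem_inter.mp hx
        have := Finset.mem_Icc.mp hx2
        rw [Finset.mem_Icc]; omega
      have hind : ((insert 0 U) ∩ Finset.Icc k (m + n - 2)).Nonempty ↔
          ((insert 0 ((U ∩ Finset.Icc (m + 1) (m + n - 2)).image (fun i => i - m)))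
            ∩ Finset.Icc (k - m) (n - 2)).Nonempty := by
        constructor
        · rintro ⟨x, hx⟩
          rw [Finset.mem_inter, Finset.mem_insert, Finset.mem_Icc] at hx
          obtain ⟨hx1, hk1, hk2⟩ := hx
          by_cases hkm : k ≤ m
          · exact ⟨0, by rw [Finset.mem_inter, Finset.mem_insert, Finset.mem_Icc]
                         exact ⟨Or.inl rfl, by omega, by omega⟩⟩
          · rcases hx1 with rfl | hxU
            · omega
            · refine ⟨x - m, ?_⟩
              rw [Finset.mem_inter, Finset.mem_insert, Finset.mem_Icc]
              refine ⟨Or.inr ?_, by omega, by omega⟩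
              exact Finset.mem_image.mpr ⟨x, Finset.mem_inter.mpr
                ⟨hxU, Finset.mem_Icc.mpr ⟨by omega, by omega⟩⟩, rfl⟩
        · rintro ⟨t, ht⟩
          rw [Finset.mem_inter, Finset.mem_insert, Finset.mem_Icc] at ht
          obtain ⟨ht1, hk1, hk2⟩ := ht
          by_cases hkm : k ≤ m
          · exact ⟨m, by rw [Finset.mem_inter, Finset.mem_insert, Finset.mem_Icc]
                         exact ⟨Or.inr hmU, hkm, by omega⟩⟩
          · rcases ht1 with rfl | htT
            · omega
            · obtain ⟨x, hx, rfl⟩ := Finset.mem_image.mp htT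
              obtain ⟨hxU, hx2⟩ := Finset.mem_inter.mp hx
              have := Finset.mem_Icc.mp hx2
              exact ⟨x, by rw [Finset.mem_inter, Finset.mem_insert, Finset.mem_Icc]
                           exact ⟨Or.inr hxU, by omega, by omega⟩⟩
      simp only [proj, conv, e1, e2, e3]
      rw [if_pos hU2,
        if_pos (show m ∈ U ∧ U ⊆ Finset.Icc 1 (m + n - 2) from ⟨hmU, hU2⟩),
        if_pos (show m ∈ U ∧ U ⊆ Finset.Icc 1 (m + n - 1) from ⟨hmU, hUN⟩),
        if_pos (show m ∈ insert (m + n - 1) U ∧ insert (m + n - 1) U ⊆ Finset.Icc 1 (m + n - 1)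
          from ⟨Finset.mem_insert_of_mem hmU, hins⟩),
        hA, hT, himg, hmid, if_pos hTsub]
      simp only [hind]
      split_ifs <;> ring
    · have h1 : m ∉ insert (m + n - 1) U := by
        rw [Finset.mem_insert]
        push_neg
        exact ⟨by omega, hmU⟩
      simp [proj, conv, e1, e2, e3, hU2, hmU, h1]
  · have hU' : ¬ (m ∈ U ∧ U ⊆ Finset.Icc 1 (m + n - 2)) := by tauto
    simp [proj, conv, e1, e2, hU2, hU']
end

section
/- Let m ≥ 1 and n ≥ 2, and let a ∈ ℝ^{2^{m−1}} (indexed by subsets of {1,…,m−1}) and b ∈ ℝ^{2^{n−1}} (indexed by subsets of {1,…,n−1}). Then for every k ∈ {0, 1, …, m+n−2}, ρ^{m+n}_k(a ∗ b) = a ∗ ρ^n_{k−m}(b), where by convention ρ^n_{k−m} := 0 whenever k < m. -/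
/-- The map `ρ^{n+1}_k : ℝ^{2^n} → ℝ^{2^{n-1}}`: the coordinate at `T ⊆ {1,…,n-1}` is
`a_T` if `T ⊆ {1,…,k}`, and `0` otherwise. -/
noncomputable def rho (n k : ℕ) (a : Finset ℕ → ℝ) : Finset ℕ → ℝ := fun T =>
  if T ⊆ Finset.Icc 1 (n - 1) ∧ T ⊆ Finset.Icc 1 k then a T else 0

theorem stmt_14 (m n : ℕ) (hm : 1 ≤ m) (hn : 2 ≤ n) (a b : Finset ℕ → ℝ)
    (ha : ∀ S : Finset ℕ, ¬ S ⊆ Finset.Icc 1 (m - 1) → a S = 0)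
    (hb : ∀ T : Finset ℕ, ¬ T ⊆ Finset.Icc 1 (n - 1) → b T = 0)
    (k : ℕ) (hk : k ≤ m + n - 2) :
    rho (m + n - 1) k (conv m n a b) =
      if k < m then 0 else conv m (n - 1) a (rho (n - 1) (k - m) b) := by
  have hmn : m + (n - 1) - 1 = m + n - 1 - 1 := by omega
  by_cases hkm : k < m
  · rw [if_pos hkm]
    funext U
    simp only [rho, conv, Pi.zero_apply]
    split_ifs with h1 h2
    · exfalso
      have := h1.2 h2.1
      simp only [Finset.mem_Icc] at this
      omega
    · rfl
    · rfl
  · rw [if_neg hkm]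
    funext U
    simp only [rho, conv]
    by_cases hU2 : U ⊆ Finset.Icc 1 (m + n - 1 - 1)
    · by_cases hmU : m ∈ U
      · have hU1 : U ⊆ Finset.Icc 1 (m + n - 1) :=
          hU2.trans (Finset.Icc_subset_Icc_right (by omega))
        have hRcond : m ∈ U ∧ U ⊆ Finset.Icc 1 (m + (n - 1) - 1) :=
          ⟨hmU, by rw [hmn]; exact hU2⟩
        rw [if_pos hRcond]
        have hImEq : (U ∩ Finset.Icc (m + 1) (m + n - 1)).image (fun i => i - m)
            = (U ∩ Finset.Icc (m + 1) (m + (n - 1) - 1)).image (fun i => i - m) := by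
          congr 1
          ext i
          simp only [Finset.mem_inter, Finset.mem_Icc]
          constructor
          · rintro ⟨hi, h1, h2⟩
            have := hU2 hi
            simp only [Finset.mem_Icc] at this
            exact ⟨hi, h1, by omega⟩
          · rintro ⟨hi, h1, h2⟩
            exact ⟨hi, h1, by omega⟩
        by_cases hUk : U ⊆ Finset.Icc 1 k
        · rw [if_pos ⟨hU2, hUk⟩, if_pos ⟨hmU, hU1⟩, hImEq]
          have hcond : ((U ∩ Finset.Icc (m + 1) (m + (n - 1) - 1)).image (fun i => i - m))
                ⊆ Finset.Icc 1 (n - 1 - 1) ∧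
              ((U ∩ Finset.Icc (m + 1) (m + (n - 1) - 1)).image (fun i => i - m))
                ⊆ Finset.Icc 1 (k - m) := by
            constructor
            · intro j hj
              simp only [Finset.mem_image, Finset.mem_inter, Finset.mem_Icc] at hj ⊢
              obtain ⟨i, ⟨hi, h1, h2⟩, rfl⟩ := hj
              omega
            · intro j hj
              simp only [Finset.mem_image, Finset.mem_inter, Finset.mem_Icc] at hj ⊢
              obtain ⟨i, ⟨hi, h1, h2⟩, rfl⟩ := hj
              have := hUk hi
              simp only [Finset.mem_Icc] at this
              omega
          rw [if_pos hcond]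
        · rw [if_neg (by tauto)]
          obtain ⟨j, hjU, hjk⟩ := Finset.not_subset.mp hUk
          have hj2 := hU2 hjU
          simp only [Finset.mem_Icc] at hj2 hjk
          have hjbig : k < j := by omega
          have hcond : ¬ ((U ∩ Finset.Icc (m + 1) (m + (n - 1) - 1)).image (fun i => i - m))
                ⊆ Finset.Icc 1 (k - m) := by
            intro hsub
            have hjmem : j - m ∈ (U ∩ Finset.Icc (m + 1) (m + (n - 1) - 1)).image
                (fun i => i - m) := by
              simp only [Finset.mem_image, Finset.mem_inter, Finset.mem_Icc]
              exact ⟨j, ⟨hjU, by omega, by omega⟩, rfl⟩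
            have := hsub hjmem
            simp only [Finset.mem_Icc] at this
            omega
          rw [if_neg (by tauto), mul_zero]
      · have hR : ¬ (m ∈ U ∧ U ⊆ Finset.Icc 1 (m + (n - 1) - 1)) := fun h => hmU h.1
        rw [if_neg hR]
        split_ifs with h1 h2
        · exact absurd h2.1 hmU
        · rfl
        · rfl
    · rw [if_neg (by tauto), if_neg (by rw [hmn]; tauto)]
end

section
/- For every n ≥ 1, the vector e_∅ ∈ ℝ^{2^n} with coordinate 1 at S = ∅ and coordinate 0 at every nonempty S ⊆ {1,…,n} is an extreme ray of the cone K_{n+1}. (This corresponds to the chain operator f^{n+1}_∅.) -/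
/-- The cone `K_r` of all linear inequalities valid on flag `f`-vectors of graded posets
of rank `r`, modelled inside `Finset ℕ → ℝ` as the functions supported on subsets of
`{1,…,r-1}` whose associated functional is nonnegative on all graded posets of rank `r`. -/
def coneK (r : ℕ) : Set (Finset ℕ → ℝ) :=
  {a | (∀ S : Finset ℕ, ¬ S ⊆ Finset.Icc 1 (r - 1) → a S = 0) ∧
    ∀ P : GradedPoset, P.rank P.top = r →
      0 ≤ ∑ S ∈ (Finset.Icc 1 (r - 1)).powerset, a S * (flagNum P S : ℝ)}

/-- The vector `e_∅` with coordinate `1` at `∅` and `0` elsewhere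
(corresponding to the chain operator `f_∅`). -/
noncomputable def eEmpty : Finset ℕ → ℝ := fun S => if S = ∅ then 1 else 0

/-- `F` is an extreme ray of the cone `K`: `F` is a nonzero element of `K` such that
whenever `F = G + H` with `G, H ∈ K`, both `G` and `H` are nonnegative multiples of `F`. -/
def IsExtremeRay (K : Set (Finset ℕ → ℝ)) (F : Finset ℕ → ℝ) : Prop :=
  F ∈ K ∧ F ≠ 0 ∧
    ∀ G H : Finset ℕ → ℝ, G ∈ K → H ∈ K → F = G + H →
      (∃ c : ℝ, 0 ≤ c ∧ G = c • F) ∧ ∃ c : ℝ, 0 ≤ c ∧ H = c • F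

/-! ### Auxiliary constructions -/

open Finset Polynomial

namespace Stmt16Aux

open scoped Classical

/-- Carrier of the layered poset: one layer for each rank `0 ≤ i ≤ n+1`,
with `m i` elements in layer `i`. -/
def LC (n : ℕ) (m : ℕ → ℕ) : Type := (i : Fin (n+2)) × Fin (m i.1)

variable {n : ℕ} {m : ℕ → ℕ}

instance : Fintype (LC n m) := inferInstanceAs (Fintype ((i : Fin (n+2)) × Fin (m i.1)))
instance : DecidableEq (LC n m) := inferInstanceAs (DecidableEq ((i : Fin (n+2)) × Fin (m i.1)))

instance : PartialOrder (LC n m) where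
  le x y := x.1 < y.1 ∨ x = y
  le_refl x := Or.inr rfl
  le_trans x y z hxy hyz := by
    rcases hxy with h | rfl
    · rcases hyz with h' | rfl
      · exact Or.inl (h.trans h')
      · exact Or.inl h
    · exact hyz
  le_antisymm x y hxy hyx := by
    rcases hxy with h | rfl
    · rcases hyx with h' | rfl
      · exact absurd (h.trans h') (lt_irrefl _)
      · rfl
    · rfl

lemma le_def {x y : LC n m} : x ≤ y ↔ x.1 < y.1 ∨ x = y := Iff.rfl

lemma lt_iff {x y : LC n m} : x < y ↔ x.1 < y.1 := by
  rw [lt_iff_le_not_ge, le_def, le_def]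
  constructor
  · rintro ⟨h | rfl, h2⟩
    · exact h
    · exact absurd (Or.inr rfl) h2
  · intro h
    refine ⟨Or.inl h, ?_⟩
    rintro (h' | rfl)
    · exact absurd (h.trans h') (lt_irrefl _)
    · exact absurd h (lt_irrefl _)

/-- The layered graded poset. -/
def layered (n : ℕ) (m : ℕ → ℕ) (hm : ∀ i, 0 < m i) (h0 : m 0 = 1) (h1 : m (n+1) = 1) :
    GradedPoset where
  carrier := LC n m
  bot := ⟨⟨0, by omega⟩, ⟨0, hm _⟩⟩
  top := ⟨⟨n+1, by omega⟩, ⟨0, hm _⟩⟩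
  bot_le x := by
    rcases Nat.eq_zero_or_pos x.1.1 with h | h
    · right
      obtain ⟨⟨i, hi⟩, ⟨a, ha⟩⟩ := x
      simp only at h
      subst h
      have ha' : a = 0 := by rw [h0] at ha; omega
      subst ha'
      rfl
    · left
      exact h
  le_top x := by
    rcases eq_or_lt_of_le (Nat.lt_succ_iff.1 x.1.2) with h | h
    · right
      obtain ⟨⟨i, hi⟩, ⟨a, ha⟩⟩ := x
      simp only at h
      subst h
      have ha' : a = 0 := by rw [h1] at ha; omega
      subst ha'
      rfl
    · left
      exact h
  rank x := x.1.1
  rank_bot := rfl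
  rank_covBy x y h := by
    have hlt : x.1.1 < y.1.1 := lt_iff.1 h.1
    by_contra hne
    have hne' : ¬ (y.1.1 = x.1.1 + 1) := hne
    have h1' : x.1.1 + 1 < y.1.1 := by omega
    have hz : x.1.1 + 1 < n + 2 := by have := y.1.2; omega
    exact h.2 (c := ⟨⟨x.1.1 + 1, hz⟩, ⟨0, hm _⟩⟩)
      (lt_iff.2 (by simp [Fin.lt_def])) (lt_iff.2 (by simpa [Fin.lt_def] using h1'))

lemma isChain_iff (c : Finset (LC n m)) :
    IsChain (· ≤ ·) (↑c : Set (LC n m)) ↔ ∀ x ∈ c, ∀ y ∈ c, x.1 = y.1 → x = y := by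
  constructor
  · intro h x hx y hy hxy
    by_contra hne
    rcases h (Finset.mem_coe.2 hx) (Finset.mem_coe.2 hy) hne with h' | h'
    · rcases h' with h' | h'
      · rw [hxy] at h'; exact lt_irrefl _ h'
      · exact hne h'
    · rcases h' with h' | h'
      · rw [hxy] at h'; exact lt_irrefl _ h'
      · exact hne h'.symm
  · intro h x hx y hy hne
    rcases lt_trichotomy x.1 y.1 with h' | h' | h'
    · exact Or.inl (Or.inl h')
    · exact absurd (h x hx y hy h') hne
    · exact Or.inr (Or.inl h')

lemma fiber_card (i : ℕ) (hi : i < n + 2) :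
    (univ.filter fun x : LC n m => x.1.1 = i).card = m i := by
  rw [← Fintype.card_fin (m i), ← card_univ]
  refine card_bij'
    (fun x hx => (⟨x.2.1,
      Nat.lt_of_lt_of_eq x.2.2 (congrArg m (mem_filter.1 hx).2)⟩ : Fin (m i)))
    (fun a _ => (⟨⟨i, hi⟩, a⟩ : LC n m))
    (fun a ha => mem_univ _)
    (fun a _ => mem_filter.2 ⟨mem_univ _, rfl⟩)
    ?_ ?_
  · intro x hx
    obtain ⟨⟨i', hi'⟩, ⟨a, ha⟩⟩ := x
    have h := (mem_filter.1 hx).2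
    simp only at h
    subst h
    rfl
  · intro a _
    rfl

lemma chains_card (S : Finset ℕ) (hS : S ⊆ Finset.Icc 1 n) :
    (univ.filter fun c : Finset (LC n m) =>
      IsChain (· ≤ ·) (↑c : Set (LC n m)) ∧ c.image (fun x : LC n m => x.1.1) = S).card
      = ∏ i ∈ S, m i := by
  have huniq : ∀ c ∈ univ.filter (fun c : Finset (LC n m) =>
      IsChain (· ≤ ·) (↑c : Set (LC n m)) ∧ c.image (fun x : LC n m => x.1.1) = S),
      ∀ k ∈ S, ∃! x, x ∈ c ∧ (fun x : LC n m => x.1.1 = k) x := by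
    intro c hc k hk
    obtain ⟨hchain, himg⟩ := (mem_filter.1 hc).2
    rw [← himg] at hk
    obtain ⟨x, hx, hxk⟩ := Finset.mem_image.1 hk
    refine ⟨x, ⟨hx, hxk⟩, ?_⟩
    rintro y ⟨hy, hyk⟩
    exact (isChain_iff c).1 hchain y hy x hx (Fin.ext (by rw [hyk, hxk]))
  have hfib : ∀ i ∈ S, m i = (univ.filter fun x : LC n m => x.1.1 = i).card := by
    intro i hi
    have hilt : i < n + 2 := by have := (Finset.mem_Icc.1 (hS hi)).2; omega
    exact (fiber_card i hilt).symm
  rw [Finset.prod_congr rfl hfib, ← Finset.card_pi]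
  have himg_mem : ∀ f ∈ S.pi (fun i => univ.filter fun x : LC n m => x.1.1 = i),
      S.attach.image (fun k => f k.1 k.2) ∈ univ.filter (fun c : Finset (LC n m) =>
        IsChain (· ≤ ·) (↑c : Set (LC n m)) ∧ c.image (fun x : LC n m => x.1.1) = S) := by
    intro f hf
    rw [Finset.mem_pi] at hf
    refine mem_filter.2 ⟨mem_univ _, ?_, ?_⟩
    · rw [isChain_iff]
      intro x hx y hy hxy
      obtain ⟨k, _, rfl⟩ := Finset.mem_image.1 hx
      obtain ⟨l, _, rfl⟩ := Finset.mem_image.1 hy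
      have hk := (mem_filter.1 (hf k.1 k.2)).2
      have hl := (mem_filter.1 (hf l.1 l.2)).2
      have hkl : k.1 = l.1 := by
        rw [← hk, ← hl]
        exact congrArg Fin.val hxy
      have : k = l := Subtype.ext hkl
      rw [this]
    · rw [Finset.image_image]
      ext a
      constructor
      · intro ha
        obtain ⟨k, _, hka⟩ := Finset.mem_image.1 ha
        have := (mem_filter.1 (hf k.1 k.2)).2
        rw [← hka]
        simp only [Function.comp_apply]
        rw [this]
        exact k.2
      · intro ha
        refine Finset.mem_image.2 ⟨⟨a, ha⟩, Finset.mem_attach _ _, ?_⟩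
        exact (mem_filter.1 (hf a ha)).2
  refine card_bij'
    (fun c hc => fun k hk => Finset.choose _ c (huniq c hc k hk))
    (fun f _ => S.attach.image (fun k => f k.1 k.2))
    ?_ himg_mem ?_ ?_
  · intro c hc
    rw [Finset.mem_pi]
    intro k hk
    exact mem_filter.2 ⟨mem_univ _,
      Finset.choose_property (fun x : LC n m => x.1.1 = k) c (huniq c hc k hk)⟩
  · intro c hc
    obtain ⟨hchain, himg⟩ := (mem_filter.1 hc).2
    ext x
    constructor
    · intro hx
      obtain ⟨k, _, hka⟩ := Finset.mem_image.1 hx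
      rw [← hka]
      exact Finset.choose_mem _ _ _
    · intro hx
      have hxS : x.1.1 ∈ S := by
        rw [← himg]; exact Finset.mem_image_of_mem _ hx
      refine Finset.mem_image.2 ⟨⟨x.1.1, hxS⟩, Finset.mem_attach _ _, ?_⟩
      exact ((huniq c hc x.1.1 hxS).unique (Finset.choose_spec _ _ _) ⟨hx, rfl⟩)
  · intro f hf
    funext k hk
    have hmem : f k hk ∈ S.attach.image (fun k => f k.1 k.2) :=
      Finset.mem_image.2 ⟨⟨k, hk⟩, Finset.mem_attach _ _, rfl⟩
    have hrk : (f k hk).1.1 = k := (mem_filter.1 ((Finset.mem_pi.1 hf) k hk)).2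
    exact ((huniq _ (himg_mem f hf) k hk).unique (Finset.choose_spec _ _ _) ⟨hmem, hrk⟩)

lemma flagNum_layered (n : ℕ) (m : ℕ → ℕ) (hm : ∀ i, 0 < m i) (h0 : m 0 = 1)
    (h1 : m (n+1) = 1) (S : Finset ℕ) (hS : S ⊆ Finset.Icc 1 n) :
    flagNum (layered n m hm h0 h1) S = ∏ i ∈ S, m i := by
  have hset : {c : Finset (LC n m) |
      IsChain (· ≤ ·) (↑c : Set (LC n m)) ∧ c.image (fun x : LC n m => x.1.1) = S}
      = ↑(univ.filter fun c : Finset (LC n m) =>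
        IsChain (· ≤ ·) (↑c : Set (LC n m)) ∧ c.image (fun x : LC n m => x.1.1) = S) := by
    ext c; simp
  show Set.ncard {c : Finset (LC n m) |
      IsChain (· ≤ ·) (↑c : Set (LC n m)) ∧ c.image (fun x : LC n m => x.1.1) = S} = _
  rw [hset, Set.ncard_coe_finset, chains_card S hS]

lemma flagNum_empty (P : GradedPoset) : flagNum P ∅ = 1 := by
  unfold flagNum
  have hset : {c : Finset P.carrier |
      IsChain (· ≤ ·) (↑c : Set P.carrier) ∧ c.image P.rank = ∅} = {∅} := by
    ext c
    simp only [Set.mem_setOf_eq, Set.mem_singleton_iff, Finset.image_eq_empty]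
    constructor
    · rintro ⟨-, h⟩; exact h
    · rintro rfl
      exact ⟨by simp, rfl⟩
  rw [hset, Set.ncard_singleton]

/-- The exponent `∑_{i ∈ S} 2^i`. -/
def eexp (S : Finset ℕ) : ℕ := ∑ i ∈ S, 2 ^ i

lemma eexp_inj : Function.Injective eexp := Finset.geomSum_injective (le_refl 2)

lemma eexp_pos {S : Finset ℕ} (hS : S ≠ ∅) : 0 < eexp S := by
  obtain ⟨i, hi⟩ := Finset.nonempty_iff_ne_empty.2 hS
  calc 0 < 2 ^ i := pow_pos (by norm_num) i
    _ ≤ eexp S := Finset.single_le_sum (fun j _ => Nat.zero_le _) hi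

/-- Layer sizes: `t^(2^i)` on layers `1 ≤ i ≤ n`, and `1` elsewhere. -/
def mfun (n t : ℕ) (i : ℕ) : ℕ := if i ∈ Finset.Icc 1 n then t ^ (2 ^ i) else 1

lemma mfun_pos {n t : ℕ} (ht : 1 ≤ t) (i : ℕ) : 0 < mfun n t i := by
  unfold mfun
  split
  · exact pow_pos (by omega) _
  · exact one_pos

lemma mfun_zero (n t : ℕ) : mfun n t 0 = 1 := by
  unfold mfun
  rw [if_neg]
  simp

lemma mfun_top (n t : ℕ) : mfun n t (n+1) = 1 := by
  unfold mfun
  rw [if_neg]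
  simp

lemma prod_mfun {n t : ℕ} {S : Finset ℕ} (hS : S ⊆ Finset.Icc 1 n) :
    ∏ i ∈ S, mfun n t i = t ^ eexp S := by
  rw [eexp, ← Finset.prod_pow_eq_pow_sum]
  exact Finset.prod_congr rfl fun i hi => if_pos (hS hi)

/-- Key lemma: if the functional associated with `G` is squeezed between `0` and `1`
on all graded posets of rank `n+1`, then `G` is a nonnegative multiple of `eEmpty`. -/
lemma key (n : ℕ) (G : Finset ℕ → ℝ)
    (hGc : ∀ S : Finset ℕ, ¬ S ⊆ Finset.Icc 1 n → G S = 0)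
    (hlow : ∀ P : GradedPoset, P.rank P.top = n + 1 →
      0 ≤ ∑ S ∈ (Finset.Icc 1 n).powerset, G S * (flagNum P S : ℝ))
    (hup : ∀ P : GradedPoset, P.rank P.top = n + 1 →
      ∑ S ∈ (Finset.Icc 1 n).powerset, G S * (flagNum P S : ℝ) ≤ 1) :
    ∃ c : ℝ, 0 ≤ c ∧ G = c • eEmpty := by
  classical
  set q : Polynomial ℝ := ∑ S ∈ (Finset.Icc 1 n).powerset, C (G S) * X ^ (eexp S) with hq
  have hqeval : ∀ x : ℝ, q.eval x = ∑ S ∈ (Finset.Icc 1 n).powerset, G S * x ^ eexp S := by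
    intro x
    rw [hq, Polynomial.eval_finset_sum]
    exact Finset.sum_congr rfl fun S _ => by
      rw [Polynomial.eval_mul, Polynomial.eval_C, Polynomial.eval_pow, Polynomial.eval_X]
  -- the evaluation at naturals `t ≥ 1` is squeezed between 0 and 1
  have hbound : ∀ t : ℕ, 1 ≤ t → 0 ≤ q.eval (t : ℝ) ∧ q.eval (t : ℝ) ≤ 1 := by
    intro t ht
    set P := layered n (mfun n t) (mfun_pos ht) (mfun_zero n t) (mfun_top n t) with hP
    have hPr : P.rank P.top = n + 1 := rfl
    have hsum_eq : ∑ S ∈ (Finset.Icc 1 n).powerset, G S * (flagNum P S : ℝ)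
        = q.eval (t : ℝ) := by
      rw [hqeval]
      refine Finset.sum_congr rfl fun S hS => ?_
      rw [hP, flagNum_layered n _ _ _ _ S (Finset.mem_powerset.1 hS),
        prod_mfun (Finset.mem_powerset.1 hS)]
      push_cast
      ring
    constructor
    · rw [← hsum_eq]; exact hlow P hPr
    · rw [← hsum_eq]; exact hup P hPr
  -- hence q has degree ≤ 0
  have hdeg : q.degree ≤ 0 := by
    by_contra hd
    push_neg at hd
    have h1 : Filter.Tendsto (fun x : ℝ => |q.eval x|) Filter.atTop Filter.atTop :=
      Polynomial.abs_tendsto_atTop q hd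
    have h2 : Filter.Tendsto (fun t : ℕ => |q.eval (t : ℝ)|) Filter.atTop Filter.atTop :=
      h1.comp tendsto_natCast_atTop_atTop
    have h3 := (h2.eventually_gt_atTop 1).and (Filter.eventually_ge_atTop 1)
    obtain ⟨t, ht1, ht2⟩ := h3.exists
    obtain ⟨hb1, hb2⟩ := hbound t ht2
    have : |q.eval (t : ℝ)| ≤ 1 := abs_le.2 ⟨by linarith, hb2⟩
    linarith
  -- hence all coefficients at nonempty sets vanish
  have hcoeff : ∀ S ∈ (Finset.Icc 1 n).powerset, S ≠ ∅ → G S = 0 := by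
    intro S hSmem hSne
    have h1 : q.coeff (eexp S) = G S := by
      rw [hq, Polynomial.finset_sum_coeff]
      rw [Finset.sum_eq_single S]
      · simp [Polynomial.coeff_C_mul, Polynomial.coeff_X_pow]
      · intro T hT hTne
        rw [Polynomial.coeff_C_mul, Polynomial.coeff_X_pow,
          if_neg (fun h => hTne (eexp_inj h.symm)), mul_zero]
      · intro h
        exact absurd hSmem h
    have h2 : q.coeff (eexp S) = 0 := by
      have := Polynomial.eq_C_of_degree_le_zero hdeg
      rw [this, Polynomial.coeff_C, if_neg (Nat.pos_iff_ne_zero.1 (eexp_pos hSne))]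
    rw [← h1, h2]
  -- G ∅ is nonnegative, using the rank-(n+1) chain
  have hGe : 0 ≤ G ∅ := by
    set P := layered n (mfun n 1) (mfun_pos le_rfl) (mfun_zero n 1) (mfun_top n 1) with hP
    have hPr : P.rank P.top = n + 1 := rfl
    have h := hlow P hPr
    rw [Finset.sum_eq_single ∅] at h
    · rwa [flagNum_empty, Nat.cast_one, mul_one] at h
    · intro T hT hTne
      rw [hcoeff T hT hTne, zero_mul]
    · intro h'
      exact absurd (Finset.mem_powerset.2 (Finset.empty_subset _)) h'
  refine ⟨G ∅, hGe, ?_⟩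
  funext S
  by_cases hS : S = ∅
  · subst hS
    simp [eEmpty]
  · by_cases hS' : S ⊆ Finset.Icc 1 n
    · rw [hcoeff S (Finset.mem_powerset.2 hS') hS]
      simp [eEmpty, hS]
    · rw [hGc S hS']
      simp [eEmpty, hS]

end Stmt16Aux

open Stmt16Aux in
theorem stmt_16 (n : ℕ) (hn : 1 ≤ n) : IsExtremeRay (coneK (n + 1)) eEmpty := by
  classical
  have hIcc : n + 1 - 1 = n := by omega
  refine ⟨⟨?_, ?_⟩, ?_, ?_⟩
  · intro S hS
    rw [eEmpty, if_neg]
    rintro rfl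
    exact hS (Finset.empty_subset _)
  · intro P hP
    refine Finset.sum_nonneg fun S _ => ?_
    rw [eEmpty]
    split
    · rw [one_mul]; exact Nat.cast_nonneg _
    · rw [zero_mul]
  · intro h
    have := congrFun h ∅
    simp [eEmpty] at this
  · intro G H hG hH hsum
    obtain ⟨hGc, hGpos⟩ := hG
    obtain ⟨hHc, hHpos⟩ := hH
    simp only [hIcc] at hGc hGpos hHc hHpos
    -- the two functionals sum to the constant 1
    have hsplit : ∀ P : GradedPoset, P.rank P.top = n + 1 →
        ∑ S ∈ (Finset.Icc 1 n).powerset, G S * (flagNum P S : ℝ)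
          + ∑ S ∈ (Finset.Icc 1 n).powerset, H S * (flagNum P S : ℝ) = 1 := by
      intro P hP
      rw [← Finset.sum_add_distrib]
      have hterm : ∀ S ∈ (Finset.Icc 1 n).powerset,
          G S * (flagNum P S : ℝ) + H S * (flagNum P S : ℝ)
            = eEmpty S * (flagNum P S : ℝ) := by
        intro S _
        have h' := congrFun hsum S
        simp only [Pi.add_apply] at h'
        rw [← add_mul, ← h']
      rw [Finset.sum_congr rfl hterm]
      rw [Finset.sum_eq_single ∅]
      · rw [flagNum_empty, Nat.cast_one, mul_one]
        simp [eEmpty]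
      · intro T _ hTne
        simp [eEmpty, hTne]
      · intro h'
        exact absurd (Finset.mem_powerset.2 (Finset.empty_subset _)) h'
    have hGup : ∀ P : GradedPoset, P.rank P.top = n + 1 →
        ∑ S ∈ (Finset.Icc 1 n).powerset, G S * (flagNum P S : ℝ) ≤ 1 := by
      intro P hP
      have h1 := hHpos P hP
      have h2 := hsplit P hP
      linarith
    have hHup : ∀ P : GradedPoset, P.rank P.top = n + 1 →
        ∑ S ∈ (Finset.Icc 1 n).powerset, H S * (flagNum P S : ℝ) ≤ 1 := by
      intro P hP
      have h1 := hGpos P hP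
      have h2 := hsplit P hP
      linarith
    exact ⟨key n G hGc hGpos hGup, key n H hHc hHpos hHup⟩
end
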